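/- arXiv:2206.07995 — 4 statements merged into one kernel-verified Lean document; each statement's English description precedes it below -/
import Mathlib

section
/- There exist constants C > 0 and N such that for all integers n ≥ N, | max_{x ∈ Z_2^n} |L_1(x)| − (n² − √2 · n^{3/2}) | ≤ C·n; that is, the maximum size of a binary FLL 1-ball is n² − √2·n^{3/2} + O(n). -/
open scoped Classical

/-- Length of a longest common subsequence of two lists. -/
noncomputable def lcsLen {α : Type*} (x y : List α) : ℕ :=
  sSup {k | ∃ z : List α, z.Sublist x ∧ z.Sublist y ∧ z.length = k}

/-- The fixed-length Levenshtein (FLL) distance on `Fin n → Fin q`: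
`d_ℓ(x,y) = n - LCS(x,y)`. -/
noncomputable def fllDist {q n : ℕ} (x y : Fin n → Fin q) : ℕ :=
  n - lcsLen (List.ofFn x) (List.ofFn y)

/-- The FLL `t`-ball centered at `x`. -/
noncomputable def fllBall (q n t : ℕ) (x : Fin n → Fin q) : Finset (Fin n → Fin q) :=
  Finset.univ.filter fun y => fllDist x y ≤ t

/-- The Hamming `t`-ball centered at `x`. -/
noncomputable def hammingBall (q n t : ℕ) (x : Fin n → Fin q) : Finset (Fin n → Fin q) :=
  Finset.univ.filter fun y => hammingDist x y ≤ t

/-- The number of runs (maximal blocks of consecutive equal symbols) of a list. -/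
def numRuns {α : Type*} [DecidableEq α] : List α → ℕ
  | [] => 0
  | [_] => 1
  | a :: b :: l => (if a = b then 0 else 1) + numRuns (b :: l)

/-- A list is alternating (of shape `σ σ' σ σ' ⋯` with `σ ≠ σ'`): adjacent entries
differ and entries two apart agree. -/
def IsAltList {α : Type*} (l : List α) : Prop :=
  (∀ i, ∀ h : i + 1 < l.length, l.get ⟨i, by omega⟩ ≠ l.get ⟨i + 1, h⟩) ∧
  (∀ i, ∀ h : i + 2 < l.length, l.get ⟨i, by omega⟩ = l.get ⟨i + 2, h⟩)

/-- The contiguous block `l_i ⋯ l_j` of a list (0-indexed, inclusive). -/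
def blockSeg {α : Type*} (l : List α) (i j : ℕ) : List α := (l.drop i).take (j + 1 - i)

/-- `(i, j)` indexes a maximal alternating segment of `l`. -/
def IsMaxAltSeg {α : Type*} (l : List α) (i j : ℕ) : Prop :=
  i ≤ j ∧ j < l.length ∧ IsAltList (blockSeg l i j) ∧
    (i = 0 ∨ ¬ IsAltList (blockSeg l (i - 1) j)) ∧
    (j = l.length - 1 ∨ ¬ IsAltList (blockSeg l i (j + 1)))

/-- The index pairs of the maximal alternating segments of `l`. -/
noncomputable def maxAltSegs {α : Type*} (l : List α) : Finset (ℕ × ℕ) :=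
  (Finset.range l.length ×ˢ Finset.range l.length).filter fun p => IsMaxAltSeg l p.1 p.2

/-- `A(x)`: the number of maximal alternating segments. -/
noncomputable def numAltSegs {α : Type*} (l : List α) : ℕ := (maxAltSegs l).card

/-- The sum `Σ s_i` of the lengths of the maximal alternating segments. -/
noncomputable def segLenSum {α : Type*} (l : List α) : ℕ :=
  ∑ p ∈ maxAltSegs l, (p.2 + 1 - p.1)

/-- The sum `Σ s_i²` of the squared lengths of the maximal alternating segments. -/
noncomputable def segLenSqSum {α : Type*} (l : List α) : ℕ :=
  ∑ p ∈ maxAltSegs l, (p.2 + 1 - p.1) ^ 2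

/-- `x ∈ Z_2^n` is `a`-balanced: it has `a` maximal alternating segments, each of
length `⌈n/a⌉` or `⌈n/a⌉ - 1`. -/
def IsBalanced (n a : ℕ) (x : Fin n → Fin 2) : Prop :=
  numAltSegs (List.ofFn x) = a ∧
    ∀ p ∈ maxAltSegs (List.ofFn x),
      p.2 + 1 - p.1 = (n + a - 1) / a ∨ p.2 + 1 - p.1 = (n + a - 1) / a - 1

/-- The number of zero entries of the difference vector
`x' = (x₂ - x₁, …, x_n - x_{n-1})` (differences mod `q`). -/
def zerosDiff {q n : ℕ} (x : Fin n → Fin q) : ℕ :=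
  (List.zipWith (fun a b => a - b) (List.ofFn x).tail (List.ofFn x)).countP fun v => v.val == 0

/-- Hamming weight of a binary word. -/
def wt {n : ℕ} (a : Fin n → Fin 2) : ℕ := (Finset.univ.filter fun i => a i ≠ 0).card

/-- An anticode of diameter one in `Z_2^n` under the FLL metric. -/
def IsAnticode1 (n : ℕ) (A : Finset (Fin n → Fin 2)) : Prop :=
  ∀ a ∈ A, ∀ b ∈ A, fllDist a b ≤ 1

/-- A maximal anticode of diameter one. -/
def IsMaximalAnticode1 (n : ℕ) (A : Finset (Fin n → Fin 2)) : Prop :=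
  IsAnticode1 n A ∧ ∀ B : Finset (Fin n → Fin 2), IsAnticode1 n B → A ⊆ B → A = B

/-- `χ(s)`: the total number, over all `x ∈ Z_q^n`, of maximal alternating
segments of `x` of length `s`. -/
noncomputable def chi (q n s : ℕ) : ℕ :=
  ∑ x : Fin n → Fin q, ((maxAltSegs (List.ofFn x)).filter fun p => p.2 + 1 - p.1 = s).card

/-!
A word `y ≠ x` of `L₁(x)` differs from `x` exactly on an interval `[p, q]`; since the alphabet
is binary, `y` is determined by `(p, q)` and by whether it deletes `x_p` and inserts after `x_q`
(possible iff `x_p ≠ x_{p+1}`) or deletes `x_q` and inserts before `x_p` (possible iff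
`x_{q-1} ≠ x_q`), and the two words coincide iff `x` alternates on `[p, q]`. Each of the `d`
positions `t` with `x_t ≠ x_{t+1}` yields `n` such pairs, so `|L₁(x)| = n d - P + O(n)`, where `P`
counts the pairs `p < q` in a common maximal alternating segment. The `n - d` segments have total
length `n`, so Cauchy–Schwarz gives `2P + n ≥ n² / (n - d)`, and then AM–GM bounds `n d - P` by
`n² - n √(2n) + O(n)`. Alternating blocks of length `⌊√(2n)⌋` attain this up to `O(n)`.
-/

open Finset

namespace Finset

variable {ι β : Type*} [DecidableEq β]

def fiberPairs (s : Finset ι) (f : ι → β) : Finset (ι × ι) :=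
  {pq ∈ s ×ˢ s | f pq.1 = f pq.2}

variable (s : Finset ι) (f : ι → β)

theorem card_fiberPairs_eq_sum_sq :
    #(s.fiberPairs f) = ∑ c ∈ s.image f, #{a ∈ s | f a = c} ^ 2 := by
  rw [fiberPairs, card_eq_sum_card_fiberwise (f := fun pq => f pq.1) (t := s.image f)]
  · refine sum_congr rfl fun c _ => ?_
    rw [sq, ← card_product, filter_filter]
    congr 1
    ext ⟨a, b⟩
    simp only [mem_filter, mem_product]
    constructor
    · rintro ⟨⟨ha, hb⟩, hab, rfl⟩
      exact ⟨⟨ha, rfl⟩, hb, hab.symm⟩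
    · rintro ⟨⟨ha, rfl⟩, hb, hab⟩
      exact ⟨⟨ha, hb⟩, hab.symm, rfl⟩
  · intro pq h
    exact mem_image_of_mem f (mem_product.mp (mem_filter.mp h).1).1

theorem sq_card_le_card_image_mul_card_fiberPairs :
    #s ^ 2 ≤ #(s.image f) * #(s.fiberPairs f) := by
  rw [card_fiberPairs_eq_sum_sq, card_eq_sum_card_image f s]
  exact sq_sum_le_card_mul_sum_sq

theorem card_fiberPairs_le_mul {m : ℕ} (h : ∀ c, #{a ∈ s | f a = c} ≤ m) :
    #(s.fiberPairs f) ≤ m * #s := by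
  rw [card_fiberPairs_eq_sum_sq, card_eq_sum_card_image f s, mul_sum]
  gcongr with c
  rw [sq]
  exact Nat.mul_le_mul_right _ (h c)

theorem card_fiberPairs_eq_card_add_two_mul [LinearOrder ι] :
    #(s.fiberPairs f) = #s + 2 * #{pq ∈ s ×ˢ s | pq.1 < pq.2 ∧ f pq.1 = f pq.2} := by
  have hswap : #{pq ∈ s ×ˢ s | pq.2 < pq.1 ∧ f pq.1 = f pq.2} =
      #{pq ∈ s ×ˢ s | pq.1 < pq.2 ∧ f pq.1 = f pq.2} :=
    card_equiv (Equiv.prodComm ι ι) fun pq => by simp [and_comm, eq_comm]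
  have hdiag : #{pq ∈ s ×ˢ s | pq.1 = pq.2} = #s := by
    rw [← diag_card s, diag]
    congr 1
    ext ⟨a, b⟩
    simp only [mem_filter, mem_product, mem_map, Function.Embedding.coeFn_mk, Function.diag,
      Prod.mk.injEq]
    grind
  have hsplit : #(s.fiberPairs f) = #{pq ∈ s ×ˢ s | pq.1 = pq.2} +
      #{pq ∈ s ×ˢ s | pq.1 < pq.2 ∧ f pq.1 = f pq.2} +
      #{pq ∈ s ×ˢ s | pq.2 < pq.1 ∧ f pq.1 = f pq.2} := by
    simp only [fiberPairs, card_filter, ← sum_add_distrib]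
    refine sum_congr rfl fun pq _ => ?_
    rcases lt_trichotomy pq.1 pq.2 with h | h | h
    · simp [h, h.ne, h.not_gt]
    · simp [h]
    · simp [h, h.ne', h.not_gt]
  omega

end Finset

section LCS

variable {α : Type*}

theorem lcsLen_set_bddAbove (x y : List α) :
    BddAbove {k | ∃ z : List α, z.Sublist x ∧ z.Sublist y ∧ z.length = k} := by
  refine ⟨x.length, ?_⟩
  rintro _ ⟨z, hzx, -, rfl⟩
  exact hzx.length_le

theorem le_lcsLen {x y z : List α} (hx : z.Sublist x) (hy : z.Sublist y) :
    z.length ≤ lcsLen x y :=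
  le_csSup (lcsLen_set_bddAbove x y) ⟨z, hx, hy, rfl⟩

theorem exists_sublist_length_eq_lcsLen (x y : List α) :
    ∃ z : List α, z.Sublist x ∧ z.Sublist y ∧ z.length = lcsLen x y :=
  Nat.sSup_mem (s := {k | ∃ z : List α, z.Sublist x ∧ z.Sublist y ∧ z.length = k})
    ⟨0, [], List.nil_sublist _, List.nil_sublist _, rfl⟩ (lcsLen_set_bddAbove x y)

theorem List.Sublist.exists_eq_eraseIdx {z l : List α} (h : z.Sublist l)
    (hl : z.length + 1 = l.length) : ∃ i < l.length, z = l.eraseIdx i := by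
  induction h with
  | slnil => simp at hl
  | cons a h _ => exact ⟨0, by simp, by simp [h.eq_of_length (by simpa using hl)]⟩
  | cons_cons a _ ih =>
    obtain ⟨i, hi, rfl⟩ := ih (by simpa using hl)
    exact ⟨i + 1, by simpa using hi, by simp⟩

end LCS

section FLLBall

variable {q n : ℕ} {x y : Fin n → Fin q}

theorem mem_fllBall_iff {t : ℕ} :
    y ∈ fllBall q n t x ↔ n ≤ lcsLen (List.ofFn x) (List.ofFn y) + t := by
  rw [fllBall, mem_filter_univ, fllDist]
  omega

theorem mem_fllBall_one_of_eraseIdx_eq {i j : ℕ} (hi : i < n)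
    (h : (List.ofFn x).eraseIdx i = (List.ofFn y).eraseIdx j) : y ∈ fllBall q n 1 x := by
  have hz := le_lcsLen (List.eraseIdx_sublist _ i) (h ▸ List.eraseIdx_sublist _ j)
  rw [List.length_eraseIdx_of_lt (by simpa using hi), List.length_ofFn] at hz
  rw [mem_fllBall_iff]
  omega

theorem exists_eraseIdx_eq_of_mem_fllBall_one (hy : y ∈ fllBall q n 1 x) (hxy : y ≠ x) :
    ∃ i < n, ∃ j < n, (List.ofFn x).eraseIdx i = (List.ofFn y).eraseIdx j := by
  obtain ⟨z, hzx, hzy, hz⟩ := exists_sublist_length_eq_lcsLen (List.ofFn x) (List.ofFn y)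
  have hzn : z.length ≤ n := by simpa using hzx.length_le
  rw [mem_fllBall_iff, ← hz] at hy
  rcases hzn.eq_or_lt with hzn | hzn
  · refine absurd (List.ofFn_injective ?_) hxy
    rw [← hzy.eq_of_length (by simpa using hzn), hzx.eq_of_length (by simpa using hzn)]
  obtain ⟨i, hi, rfl⟩ := hzx.exists_eq_eraseIdx (by rw [List.length_ofFn]; omega)
  obtain ⟨j, hj, hij⟩ := hzy.exists_eq_eraseIdx (by rw [List.length_ofFn]; omega)
  exact ⟨i, by simpa using hi, j, by simpa using hj, hij⟩

end FLLBall

theorem mul_sqrt_two_mul_le {n A a : ℝ} (hn : 0 ≤ n) (hA : 0 < A) (h : n ^ 2 ≤ A * (n + 2 * a)) :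
    n * √(2 * n) ≤ n * A + a + n / 2 := by
  have hs := Real.sq_sqrt (by positivity : 0 ≤ 2 * n)
  have hamgm : 2 * A * (n * √(2 * n)) ≤ 2 * n * A ^ 2 + n ^ 2 := by
    nlinarith [sq_nonneg (√(2 * n) * A - n)]
  refine le_of_mul_le_mul_left ?_ (by positivity : 0 < 2 * A)
  nlinarith

theorem sqrt_two_mul_rpow_three_halves {x : ℝ} (hx : 0 ≤ x) :
    √2 * x ^ ((3 : ℝ) / 2) = x * √(2 * x) := by
  rw [show (3 : ℝ) / 2 = 1 + 1 / 2 by norm_num, Real.rpow_add' hx (by norm_num), Real.rpow_one,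
    ← Real.sqrt_eq_rpow, Real.sqrt_mul zero_le_two]
  ring

namespace BinaryFLL

theorem fin_two_add_one_ne : ∀ a : Fin 2, a + 1 ≠ a := by decide

theorem fin_two_eq_add_one_of_ne : ∀ {a b : Fin 2}, b ≠ a → b = a + 1 := by decide

theorem fin_two_eq_of_ne_of_ne : ∀ {a b c : Fin 2}, a ≠ c → b ≠ c → a = b := by decide

variable {n : ℕ}

/-- Padding by `0` beyond the length lets all index arithmetic below happen in `ℕ`. -/
def entry (x : Fin n → Fin 2) (i : ℕ) : Fin 2 := if h : i < n then x ⟨i, h⟩ else 0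

theorem entry_of_lt (x : Fin n → Fin 2) {i : ℕ} (h : i < n) : entry x i = x ⟨i, h⟩ := dif_pos h

theorem entry_of_le (x : Fin n → Fin 2) {i : ℕ} (h : n ≤ i) : entry x i = 0 := dif_neg (by omega)

theorem entry_val (x : Fin n → Fin 2) (k : Fin n) : entry x k = x k := entry_of_lt x k.isLt

theorem ext_entry {x y : Fin n → Fin 2} (h : ∀ k < n, entry x k = entry y k) : x = y :=
  funext fun k => by rw [← entry_val x k, ← entry_val y k, h k k.isLt]

theorem getElem_eraseIdx_ofFn (x : Fin n → Fin 2) (i k : ℕ)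
    (h : k < ((List.ofFn x).eraseIdx i).length) :
    ((List.ofFn x).eraseIdx i)[k] = entry x (if k < i then k else k + 1) := by
  rw [List.getElem_eraseIdx]
  split_ifs <;> rw [List.getElem_ofFn, entry_of_lt]

theorem eraseIdx_ofFn_eq_iff {x y : Fin n → Fin 2} {i j : ℕ} (hi : i < n) (hj : j < n) :
    (List.ofFn x).eraseIdx i = (List.ofFn y).eraseIdx j ↔
      ∀ k < n - 1, entry x (if k < i then k else k + 1) = entry y (if k < j then k else k + 1) := by
  simp only [List.ext_getElem_iff, getElem_eraseIdx_ofFn, List.length_eraseIdx, List.length_ofFn,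
    hi, hj, if_true, true_and]
  exact ⟨fun h k hk => h k hk hk, fun h k hk _ => h k hk⟩

/-- `leftShift x p q` deletes `x_p` and inserts the complement of `x_q` right after `x_q`;
`rightShift x p q` deletes `x_q` and inserts the complement of `x_p` right before `x_p`. -/
def leftShift (x : Fin n → Fin 2) (p q : ℕ) : Fin n → Fin 2 := fun k =>
  if (k : ℕ) = q then entry x q + 1 else if p ≤ k ∧ (k : ℕ) < q then entry x (k + 1) else entry x k

def rightShift (x : Fin n → Fin 2) (p q : ℕ) : Fin n → Fin 2 := fun k =>
  if (k : ℕ) = p then entry x p + 1 else if p < k ∧ (k : ℕ) ≤ q then entry x (k - 1) else entry x k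

theorem entry_leftShift (x : Fin n → Fin 2) (p q : ℕ) {k : ℕ} (hk : k < n) :
    entry (leftShift x p q) k =
      if k = q then entry x q + 1 else if p ≤ k ∧ k < q then entry x (k + 1) else entry x k := by
  rw [entry_of_lt _ hk]
  rfl

theorem entry_rightShift (x : Fin n → Fin 2) (p q : ℕ) {k : ℕ} (hk : k < n) :
    entry (rightShift x p q) k =
      if k = p then entry x p + 1 else if p < k ∧ k ≤ q then entry x (k - 1) else entry x k := by
  rw [entry_of_lt _ hk]
  rfl

theorem eraseIdx_ofFn_leftShift (x : Fin n → Fin 2) {p q : ℕ} (hpq : p ≤ q) (hq : q < n) :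
    (List.ofFn x).eraseIdx p = (List.ofFn (leftShift x p q)).eraseIdx q := by
  rw [eraseIdx_ofFn_eq_iff (by omega) hq]
  intro k hk
  rw [entry_leftShift _ _ _ (by split_ifs <;> omega)]
  split_ifs <;> first | rfl | omega

theorem eraseIdx_ofFn_rightShift (x : Fin n → Fin 2) {p q : ℕ} (hpq : p ≤ q) (hq : q < n) :
    (List.ofFn x).eraseIdx q = (List.ofFn (rightShift x p q)).eraseIdx p := by
  rw [eraseIdx_ofFn_eq_iff hq (by omega)]
  intro k hk
  rw [entry_rightShift _ _ _ (by split_ifs <;> omega)]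
  split_ifs <;> first | rfl | omega

theorem leftShift_mem_fllBall (x : Fin n → Fin 2) {p q : ℕ} (hpq : p ≤ q) (hq : q < n) :
    leftShift x p q ∈ fllBall 2 n 1 x :=
  mem_fllBall_one_of_eraseIdx_eq (by omega) (eraseIdx_ofFn_leftShift x hpq hq)

theorem rightShift_mem_fllBall (x : Fin n → Fin 2) {p q : ℕ} (hpq : p ≤ q) (hq : q < n) :
    rightShift x p q ∈ fllBall 2 n 1 x :=
  mem_fllBall_one_of_eraseIdx_eq hq (eraseIdx_ofFn_rightShift x hpq hq)

def DiffSpan (x y : Fin n → Fin 2) (p q : ℕ) : Prop :=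
  (∀ k < n, (k < p ∨ q < k) → entry y k = entry x k) ∧ entry y p ≠ entry x p ∧
    entry y q ≠ entry x q

namespace DiffSpan

variable {x y : Fin n → Fin 2} {p q : ℕ}

theorem lt_left (h : DiffSpan x y p q) : p < n := by
  by_contra hp
  exact h.2.1 (by rw [entry_of_le _ (by omega), entry_of_le _ (by omega)])

theorem lt_right (h : DiffSpan x y p q) : q < n := by
  by_contra hq
  exact h.2.2 (by rw [entry_of_le _ (by omega), entry_of_le _ (by omega)])

theorem unique {p' q' : ℕ} (h : DiffSpan x y p q) (h' : DiffSpan x y p' q') :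
    p = p' ∧ q = q' := by
  constructor
  · rcases lt_trichotomy p p' with hp | hp | hp
    · exact absurd (h'.1 p h.lt_left (Or.inl hp)) h.2.1
    · exact hp
    · exact absurd (h.1 p' h'.lt_left (Or.inl hp)) h'.2.1
  · rcases lt_trichotomy q q' with hq | hq | hq
    · exact absurd (h.1 q' h'.lt_right (Or.inr hq)) h'.2.2
    · exact hq
    · exact absurd (h'.1 q h.lt_right (Or.inr hq)) h.2.2

theorem eq_leftShift (h : DiffSpan x y p q)
    (hmid : ∀ k, p ≤ k → k < q → entry y k = entry x (k + 1)) : y = leftShift x p q := by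
  refine ext_entry fun k hk => ?_
  rw [entry_leftShift _ _ _ hk]
  split_ifs with hkq hk'
  · subst hkq
    exact fin_two_eq_add_one_of_ne h.2.2
  · exact hmid k hk'.1 hk'.2
  · exact h.1 k hk (by omega)

theorem eq_rightShift (h : DiffSpan x y p q)
    (hmid : ∀ k, p < k → k ≤ q → entry y k = entry x (k - 1)) : y = rightShift x p q := by
  refine ext_entry fun k hk => ?_
  rw [entry_rightShift _ _ _ hk]
  split_ifs with hkp hk'
  · subst hkp
    exact fin_two_eq_add_one_of_ne h.2.1
  · exact hmid k hk'.1 hk'.2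
  · exact h.1 k hk (by omega)

end DiffSpan

theorem exists_diffSpan {x y : Fin n → Fin 2} (hxy : y ≠ x) : ∃ p q, p ≤ q ∧ DiffSpan x y p q := by
  set S := {k ∈ range n | entry y k ≠ entry x k}
  have hS : S.Nonempty := by
    obtain ⟨k, hk⟩ := Function.ne_iff.mp hxy
    exact ⟨k, mem_filter.mpr ⟨mem_range.mpr k.isLt, by rwa [entry_val, entry_val]⟩⟩
  refine ⟨S.min' hS, S.max' hS, S.min'_le _ (S.max'_mem hS), fun k hk hout => ?_,
    (mem_filter.mp (S.min'_mem hS)).2, (mem_filter.mp (S.max'_mem hS)).2⟩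
  by_contra hne
  have hkS : k ∈ S := mem_filter.mpr ⟨mem_range.mpr hk, hne⟩
  have := S.min'_le k hkS
  have := S.le_max' k hkS
  omega

theorem diffSpan_leftShift (x : Fin n → Fin 2) {p q : ℕ} (hpq : p ≤ q) (hq : q < n)
    (hp : p < q → entry x p ≠ entry x (p + 1)) : DiffSpan x (leftShift x p q) p q := by
  refine ⟨fun k hk hout => ?_, ?_, ?_⟩
  · rw [entry_leftShift _ _ _ hk, if_neg (by omega), if_neg (by omega)]
  · rw [entry_leftShift _ _ _ (by omega)]
    rcases hpq.eq_or_lt with rfl | hpq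
    · rw [if_pos rfl]
      exact fin_two_add_one_ne _
    · rw [if_neg hpq.ne, if_pos ⟨le_rfl, hpq⟩]
      exact (hp hpq).symm
  · rw [entry_leftShift _ _ _ hq, if_pos rfl]
    exact fin_two_add_one_ne _

theorem diffSpan_rightShift (x : Fin n → Fin 2) {p q : ℕ} (hpq : p ≤ q) (hq : q < n)
    (hq' : p < q → entry x (q - 1) ≠ entry x q) : DiffSpan x (rightShift x p q) p q := by
  refine ⟨fun k hk hout => ?_, ?_, ?_⟩
  · rw [entry_rightShift _ _ _ hk, if_neg (by omega), if_neg (by omega)]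
  · rw [entry_rightShift _ _ _ (by omega), if_pos rfl]
    exact fin_two_add_one_ne _
  · rw [entry_rightShift _ _ _ hq]
    rcases hpq.eq_or_lt with rfl | hpq
    · rw [if_pos rfl]
      exact fin_two_add_one_ne _
    · rw [if_neg hpq.ne', if_pos ⟨hpq, le_rfl⟩]
      exact hq' hpq

section

def changes (x : Fin n → Fin 2) : Finset ℕ := {t ∈ range (n - 1) | entry x t ≠ entry x (t + 1)}

def leftPairs (x : Fin n → Fin 2) : Finset (ℕ × ℕ) := {pq ∈ changes x ×ˢ range n | pq.1 < pq.2}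

def rightPairs (x : Fin n → Fin 2) : Finset (ℕ × ℕ) :=
  {pq ∈ range n ×ˢ (changes x).image (· + 1) | pq.1 < pq.2}

def altPairs (x : Fin n → Fin 2) : Finset (ℕ × ℕ) :=
  {pq ∈ range n ×ˢ range n | pq.1 < pq.2 ∧ ∀ k, pq.1 ≤ k → k < pq.2 → entry x k ≠ entry x (k + 1)}

variable {x : Fin n → Fin 2} {p q : ℕ}

theorem mem_changes {t : ℕ} : t ∈ changes x ↔ t + 1 < n ∧ entry x t ≠ entry x (t + 1) := by
  rw [changes, mem_filter, mem_range]
  omega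

theorem mem_leftPairs : (p, q) ∈ leftPairs x ↔ p < q ∧ q < n ∧ entry x p ≠ entry x (p + 1) := by
  simp only [leftPairs, mem_filter, mem_product, mem_changes, mem_range]
  omega

theorem mem_rightPairs :
    (p, q) ∈ rightPairs x ↔ p < q ∧ q < n ∧ entry x (q - 1) ≠ entry x q := by
  simp only [rightPairs, mem_filter, mem_product, mem_image, mem_changes, mem_range]
  constructor
  · rintro ⟨⟨-, t, ht, rfl⟩, hpt⟩
    exact ⟨hpt, ht.1, by simpa using ht.2⟩
  · rintro ⟨hpq, hq, hx⟩
    exact ⟨⟨by omega, q - 1, ⟨by omega, by rwa [Nat.sub_add_cancel (by omega)]⟩, by omega⟩, hpq⟩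

theorem mem_altPairs : (p, q) ∈ altPairs x ↔
    p < q ∧ q < n ∧ ∀ k, p ≤ k → k < q → entry x k ≠ entry x (k + 1) := by
  simp only [altPairs, mem_filter, mem_product, mem_range]
  constructor
  · rintro ⟨⟨-, hq⟩, hpq, h⟩
    exact ⟨hpq, hq, h⟩
  · rintro ⟨hpq, hq, h⟩
    exact ⟨⟨by omega, hq⟩, hpq, h⟩

theorem mem_leftPairs_of_mem_altPairs (h : (p, q) ∈ altPairs x) : (p, q) ∈ leftPairs x := by
  obtain ⟨hpq, hq, halt⟩ := mem_altPairs.mp h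
  exact mem_leftPairs.mpr ⟨hpq, hq, halt p le_rfl hpq⟩

theorem mem_rightPairs_of_mem_altPairs (h : (p, q) ∈ altPairs x) : (p, q) ∈ rightPairs x := by
  obtain ⟨hpq, hq, halt⟩ := mem_altPairs.mp h
  refine mem_rightPairs.mpr ⟨hpq, hq, ?_⟩
  simpa [Nat.sub_add_cancel (by omega : 1 ≤ q)] using halt (q - 1) (by omega) (by omega)

theorem leftShift_eq_rightShift_iff (hpq : p < q) (hq : q < n) :
    leftShift x p q = rightShift x p q ↔ ∀ k, p ≤ k → k < q → entry x k ≠ entry x (k + 1) := by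
  constructor
  · intro h k hpk
    induction k, hpk using Nat.le_induction with
    | base =>
      intro _ hp
      have := congrArg (entry · p) h
      simp only [entry_leftShift _ _ _ (by omega : p < n),
        entry_rightShift _ _ _ (by omega : p < n),
        if_neg hpq.ne, if_pos (show p ≤ p ∧ p < q from ⟨le_rfl, hpq⟩), if_true] at this
      exact fin_two_add_one_ne _ (this ▸ hp).symm
    | succ k hpk ih =>
      intro hkq hk
      have := congrArg (entry · (k + 1)) h
      simp only [entry_leftShift _ _ _ (by omega : k + 1 < n),
        entry_rightShift _ _ _ (by omega : k + 1 < n), if_neg (by omega : k + 1 ≠ q),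
        if_neg (by omega : k + 1 ≠ p), if_pos (show p ≤ k + 1 ∧ k + 1 < q by omega),
        if_pos (show p < k + 1 ∧ k + 1 ≤ q by omega), Nat.add_sub_cancel] at this
      exact ih (by omega) (hk.trans this).symm
  · intro halt
    refine ext_entry fun k hk => ?_
    rw [entry_leftShift _ _ _ hk, entry_rightShift _ _ _ hk]
    split_ifs <;> try omega
    · subst_vars
      have := halt (k - 1) (by omega) (by omega)
      rw [Nat.sub_add_cancel (by omega)] at this
      exact (fin_two_eq_add_one_of_ne this).symm
    · subst_vars
      exact fin_two_eq_add_one_of_ne (halt k le_rfl hpq).symm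
    · have h1 := halt (k - 1) (by omega) (by omega)
      rw [Nat.sub_add_cancel (by omega)] at h1
      exact fin_two_eq_of_ne_of_ne (halt k (by omega) (by omega)).symm h1

end

section

def flips (x : Fin n → Fin 2) : Finset (Fin n → Fin 2) := (range n).image fun p => leftShift x p p

def leftShifts (x : Fin n → Fin 2) : Finset (Fin n → Fin 2) :=
  (leftPairs x).image fun pq => leftShift x pq.1 pq.2

def rightShifts (x : Fin n → Fin 2) : Finset (Fin n → Fin 2) :=
  (rightPairs x).image fun pq => rightShift x pq.1 pq.2

variable {x y : Fin n → Fin 2} {p q : ℕ}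

theorem injOn_leftShift : Set.InjOn (fun pq : ℕ × ℕ => leftShift x pq.1 pq.2) (leftPairs x) := by
  rintro ⟨p, q⟩ h ⟨p', q'⟩ h' (heq : leftShift x p q = leftShift x p' q')
  obtain ⟨hpq, hq, hp⟩ := mem_leftPairs.mp h
  obtain ⟨hpq', hq', hp'⟩ := mem_leftPairs.mp h'
  have hspan := diffSpan_leftShift x hpq.le hq fun _ => hp
  rw [heq] at hspan
  obtain ⟨rfl, rfl⟩ := hspan.unique (diffSpan_leftShift x hpq'.le hq' fun _ => hp')
  rfl

theorem injOn_rightShift :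
    Set.InjOn (fun pq : ℕ × ℕ => rightShift x pq.1 pq.2) (rightPairs x) := by
  rintro ⟨p, q⟩ h ⟨p', q'⟩ h' (heq : rightShift x p q = rightShift x p' q')
  obtain ⟨hpq, hq, hp⟩ := mem_rightPairs.mp h
  obtain ⟨hpq', hq', hp'⟩ := mem_rightPairs.mp h'
  have hspan := diffSpan_rightShift x hpq.le hq fun _ => hp
  rw [heq] at hspan
  obtain ⟨rfl, rfl⟩ := hspan.unique (diffSpan_rightShift x hpq'.le hq' fun _ => hp')
  rfl

theorem card_leftShifts : #(leftShifts x) = #(leftPairs x) := card_image_of_injOn injOn_leftShift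

theorem card_rightShifts : #(rightShifts x) = #(rightPairs x) :=
  card_image_of_injOn injOn_rightShift

theorem leftShifts_inter_rightShifts :
    leftShifts x ∩ rightShifts x = (altPairs x).image fun pq => leftShift x pq.1 pq.2 := by
  ext w
  simp only [leftShifts, rightShifts, mem_inter, mem_image, Prod.exists]
  constructor
  · rintro ⟨⟨p, q, h, rfl⟩, p', q', h', heq⟩
    obtain ⟨hpq, hq, hp⟩ := mem_leftPairs.mp h
    obtain ⟨hpq', hq', hq''⟩ := mem_rightPairs.mp h'
    have hspan := diffSpan_rightShift x hpq'.le hq' fun _ => hq''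
    rw [heq] at hspan
    obtain ⟨rfl, rfl⟩ := hspan.unique (diffSpan_leftShift x hpq.le hq fun _ => hp)
    exact ⟨p', q', mem_altPairs.mpr ⟨hpq, hq, (leftShift_eq_rightShift_iff hpq hq).mp heq.symm⟩,
      rfl⟩
  · rintro ⟨p, q, h, rfl⟩
    obtain ⟨hpq, hq, halt⟩ := mem_altPairs.mp h
    exact ⟨⟨p, q, mem_leftPairs_of_mem_altPairs h, rfl⟩, p, q, mem_rightPairs_of_mem_altPairs h,
      ((leftShift_eq_rightShift_iff hpq hq).mpr halt).symm⟩

theorem card_leftShifts_inter_rightShifts : #(leftShifts x ∩ rightShifts x) = #(altPairs x) := by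
  rw [leftShifts_inter_rightShifts, card_image_of_injOn]
  exact injOn_leftShift.mono fun _ h => mem_leftPairs_of_mem_altPairs h

theorem leftShifts_union_rightShifts_subset : leftShifts x ∪ rightShifts x ⊆ fllBall 2 n 1 x := by
  intro w hw
  simp only [leftShifts, rightShifts, mem_union, mem_image, Prod.exists] at hw
  rcases hw with ⟨p, q, h, rfl⟩ | ⟨p, q, h, rfl⟩
  · obtain ⟨hpq, hq, -⟩ := mem_leftPairs.mp h
    exact leftShift_mem_fllBall x hpq.le hq
  · obtain ⟨hpq, hq, -⟩ := mem_rightPairs.mp h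
    exact rightShift_mem_fllBall x hpq.le hq

theorem mem_leftShifts_of_eraseIdx_eq {i j : ℕ} (hi : i < n) (hj : j < n) (hij : i ≤ j)
    (h : (List.ofFn x).eraseIdx i = (List.ofFn y).eraseIdx j) (hspan : DiffSpan x y p q)
    (hpq : p < q) : y ∈ leftShifts x := by
  rw [eraseIdx_ofFn_eq_iff hi hj] at h
  have hq := hspan.lt_right
  have hip : i ≤ p := by
    by_contra hpi
    have := h p (by omega)
    rw [if_pos (by omega), if_pos (by omega)] at this
    exact hspan.2.1 this.symm
  have hqj : q ≤ j := by
    by_contra hjq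
    have := h (q - 1) (by omega)
    rw [if_neg (by omega), if_neg (by omega), Nat.sub_add_cancel (by omega)] at this
    exact hspan.2.2 this.symm
  have hmid : ∀ k, p ≤ k → k < q → entry y k = entry x (k + 1) := by
    intro k hpk hkq
    have := h k (by omega)
    rwa [if_neg (by omega), if_pos (by omega), eq_comm] at this
  refine mem_image.mpr ⟨(p, q), mem_leftPairs.mpr ⟨hpq, hq, ?_⟩, (hspan.eq_leftShift hmid).symm⟩
  rw [← hmid p le_rfl hpq]
  exact hspan.2.1.symm

theorem mem_rightShifts_of_eraseIdx_eq {i j : ℕ} (hi : i < n) (hj : j < n) (hji : j < i)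
    (h : (List.ofFn x).eraseIdx i = (List.ofFn y).eraseIdx j) (hspan : DiffSpan x y p q)
    (hpq : p < q) : y ∈ rightShifts x := by
  rw [eraseIdx_ofFn_eq_iff hi hj] at h
  have hq := hspan.lt_right
  have hjp : j ≤ p := by
    by_contra hpj
    have := h p (by omega)
    rw [if_pos (by omega), if_pos (by omega)] at this
    exact hspan.2.1 this.symm
  have hqi : q ≤ i := by
    by_contra hiq
    have := h (q - 1) (by omega)
    rw [if_neg (by omega), if_neg (by omega), Nat.sub_add_cancel (by omega)] at this
    exact hspan.2.2 this.symm
  have hmid : ∀ k, p < k → k ≤ q → entry y k = entry x (k - 1) := by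
    intro k hpk hkq
    have := h (k - 1) (by omega)
    rwa [if_pos (by omega), if_neg (by omega), Nat.sub_add_cancel (by omega), eq_comm] at this
  refine mem_image.mpr ⟨(p, q), mem_rightPairs.mpr ⟨hpq, hq, ?_⟩, (hspan.eq_rightShift hmid).symm⟩
  rw [← hmid q hpq le_rfl]
  exact hspan.2.2

theorem fllBall_one_subset (x : Fin n → Fin 2) :
    fllBall 2 n 1 x ⊆ insert x (flips x ∪ (leftShifts x ∪ rightShifts x)) := by
  intro y hy
  rcases eq_or_ne y x with rfl | hxy
  · exact mem_insert_self _ _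
  refine mem_insert_of_mem ?_
  obtain ⟨i, hi, j, hj, h⟩ := exists_eraseIdx_eq_of_mem_fllBall_one hy hxy
  obtain ⟨p, q, hpq, hspan⟩ := exists_diffSpan hxy
  rcases hpq.eq_or_lt with rfl | hpq
  · refine mem_union_left _ (mem_image.mpr ⟨p, mem_range.mpr hspan.lt_left, ?_⟩)
    exact (hspan.eq_leftShift fun k h1 h2 => absurd h2 (by omega)).symm
  rcases le_or_gt i j with hij | hji
  · exact mem_union_right _ (mem_union_left _ (mem_leftShifts_of_eraseIdx_eq hi hj hij h hspan hpq))
  · exact mem_union_right _ (mem_union_right _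
      (mem_rightShifts_of_eraseIdx_eq hi hj hji h hspan hpq))

end

section

variable (x : Fin n → Fin 2)

theorem card_leftPairs_add_card_rightPairs :
    #(leftPairs x) + #(rightPairs x) = n * #(changes x) := by
  have hleft : #(leftPairs x) = ∑ t ∈ changes x, #{q ∈ range n | t < q} := by
    simp only [leftPairs, card_filter, sum_product]
  have hright : #(rightPairs x) = ∑ t ∈ changes x, #{p ∈ range n | ¬ t < p} := by
    simp only [rightPairs, card_filter, sum_product_right]
    rw [sum_image (add_left_injective 1).injOn]
    refine sum_congr rfl fun t _ => sum_congr rfl fun p _ => ?_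
    simp only [Nat.lt_succ_iff, not_lt]
  rw [hleft, hright, ← sum_add_distrib, sum_congr rfl fun t _ => card_filter_add_card_filter_not _,
    sum_const, card_range, smul_eq_mul, mul_comm]

theorem card_fllBall_one_add_card_altPairs_le :
    #(fllBall 2 n 1 x) + #(altPairs x) ≤ 1 + n + n * #(changes x) := by
  have hcover := card_le_card (fllBall_one_subset x)
  have hinsert := card_insert_le x (flips x ∪ (leftShifts x ∪ rightShifts x))
  have hunion := card_union_le (flips x) (leftShifts x ∪ rightShifts x)
  have hflips : #(flips x) ≤ n := card_image_le.trans (card_range n).le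
  have := card_union_add_card_inter (leftShifts x) (rightShifts x)
  have := card_leftPairs_add_card_rightPairs x
  rw [card_leftShifts_inter_rightShifts, card_leftShifts, card_rightShifts] at *
  omega

theorem le_card_fllBall_one_add_card_altPairs :
    n * #(changes x) ≤ #(fllBall 2 n 1 x) + #(altPairs x) := by
  have := card_le_card (leftShifts_union_rightShifts_subset (x := x))
  have := card_union_add_card_inter (leftShifts x) (rightShifts x)
  have := card_leftPairs_add_card_rightPairs x
  rw [card_leftShifts_inter_rightShifts, card_leftShifts, card_rightShifts] at *
  omega

/-- The index of the maximal alternating segment of `x` that contains position `i`. -/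
def segIdx (i : ℕ) : ℕ := #{t ∈ range i | entry x t = entry x (t + 1)}

theorem segIdx_eq_segIdx_iff {p q : ℕ} (hpq : p ≤ q) :
    segIdx x p = segIdx x q ↔ ∀ k, p ≤ k → k < q → entry x k ≠ entry x (k + 1) := by
  rw [segIdx, segIdx, card_filter, card_filter, ← sum_range_add_sum_Ico _ hpq, left_eq_add,
    sum_eq_zero_iff]
  simp only [mem_Ico, ite_eq_right_iff, one_ne_zero, imp_false, and_imp]

theorem altPairs_eq_filter_segIdx :
    altPairs x = {pq ∈ range n ×ˢ range n | pq.1 < pq.2 ∧ segIdx x pq.1 = segIdx x pq.2} :=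
  filter_congr fun _ _ => and_congr_right fun hpq => (segIdx_eq_segIdx_iff x hpq.le).symm

theorem card_fiberPairs_segIdx : #((range n).fiberPairs (segIdx x)) = n + 2 * #(altPairs x) := by
  rw [card_fiberPairs_eq_card_add_two_mul, card_range, altPairs_eq_filter_segIdx]

theorem card_image_segIdx_le : #((range n).image (segIdx x)) ≤ n - #(changes x) := by
  have hsplit : segIdx x (n - 1) + #(changes x) = n - 1 := by
    have := card_filter_add_card_filter_not (s := range (n - 1))
      fun t => entry x t = entry x (t + 1)
    rwa [card_range] at this
  have himage : (range n).image (segIdx x) ⊆ range (segIdx x (n - 1) + 1) := by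
    intro c hc
    obtain ⟨i, hi, rfl⟩ := mem_image.mp hc
    refine mem_range.mpr (Nat.lt_succ_of_le (card_le_card fun t ht => ?_))
    simp only [mem_filter, mem_range] at ht hi ⊢
    exact ⟨by omega, ht.2⟩
  have := card_le_card himage
  have := card_image_le (s := range n) (f := segIdx x)
  rw [card_range] at *
  omega

theorem sq_le_mul_card_altPairs : n ^ 2 ≤ (n - #(changes x)) * (n + 2 * #(altPairs x)) := by
  calc n ^ 2 = #(range n) ^ 2 := by rw [card_range]
    _ ≤ #((range n).image (segIdx x)) * #((range n).fiberPairs (segIdx x)) :=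
      sq_card_le_card_image_mul_card_fiberPairs _ _
    _ ≤ (n - #(changes x)) * (n + 2 * #(altPairs x)) := by
      rw [card_fiberPairs_segIdx]
      exact Nat.mul_le_mul_right _ (card_image_segIdx_le x)

end

theorem card_fllBall_one_le (hn : 0 < n) (x : Fin n → Fin 2) :
    (#(fllBall 2 n 1 x) : ℝ) ≤ n ^ 2 - n * √(2 * n) + 3 * n := by
  have hball := card_fllBall_one_add_card_altPairs_le x
  have hsq := sq_le_mul_card_altPairs x
  have hchanges : #(changes x) < n :=
    (card_filter_le _ _).trans_lt (by rw [card_range]; omega)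
  have hsq' : (n : ℝ) ^ 2 ≤ (n - #(changes x)) * (n + 2 * #(altPairs x)) := by
    have := (Nat.cast_le (α := ℝ)).mpr hsq
    push_cast [Nat.cast_sub hchanges.le] at this
    exact this
  have hsqrt := mul_sqrt_two_mul_le (by positivity)
    (by simpa using (Nat.cast_lt (α := ℝ)).mpr hchanges) hsq'
  have : (#(fllBall 2 n 1 x) : ℝ) + #(altPairs x) ≤ 1 + n + n * #(changes x) := by
    exact_mod_cast hball
  have : (1 : ℝ) ≤ n := by exact_mod_cast hn
  linarith

/-- Alternating blocks of length `m`, each starting with the last symbol of the previous one. -/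
def altBlockWord (n m : ℕ) : Fin n → Fin 2 := fun i => if ((i : ℕ) + i / m) % 2 = 0 then 0 else 1

section

variable {m : ℕ}

theorem entry_altBlockWord_eq_iff {t : ℕ} (ht : t + 1 < n) :
    entry (altBlockWord n m) t = entry (altBlockWord n m) (t + 1) ↔ m ∣ t + 1 := by
  rw [entry_of_lt _ (by omega), entry_of_lt _ ht]
  simp only [altBlockWord, Nat.succ_div]
  by_cases hd : m ∣ t + 1 <;> simp only [hd, if_true, if_false] <;> split_ifs <;>
    simp only [zero_ne_one, one_ne_zero, iff_true, iff_false, not_true_eq_false] <;> omega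

theorem segIdx_altBlockWord {i : ℕ} (hi : i < n) :
    segIdx (altBlockWord n m) i = i / m := by
  rw [segIdx, ← Nat.card_multiples]
  exact congrArg card (filter_congr fun t ht =>
    entry_altBlockWord_eq_iff (by rw [mem_range] at ht; omega))

theorem card_changes_altBlockWord :
    #(changes (altBlockWord n m)) = n - 1 - (n - 1) / m := by
  have hchanges : changes (altBlockWord n m) = {t ∈ range (n - 1) | ¬ m ∣ t + 1} :=
    filter_congr fun t ht => not_congr (entry_altBlockWord_eq_iff (by rw [mem_range] at ht; omega))
  have := card_filter_add_card_filter_not (s := range (n - 1)) fun t => m ∣ t + 1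
  rw [Nat.card_multiples, card_range] at this
  rw [hchanges]
  exact Nat.eq_sub_of_add_eq' this

theorem card_altPairs_altBlockWord_le (hm : 0 < m) :
    n + 2 * #(altPairs (altBlockWord n m)) ≤ m * n := by
  have := card_fiberPairs_le_mul (range n) (segIdx (altBlockWord n m)) (m := m) fun c => ?_
  · rwa [card_fiberPairs_segIdx, card_range] at this
  calc #{i ∈ range n | segIdx (altBlockWord n m) i = c}
      ≤ #(Ico (c * m) (c * m + m)) := card_le_card fun i hi => by
        rw [mem_filter, mem_range] at hi
        rw [segIdx_altBlockWord hi.1, Nat.div_eq_iff hm] at hi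
        rw [mem_Ico]
        omega
    _ = m := by rw [Nat.card_Ico]; omega

theorem sq_le_card_fllBall_one_altBlockWord (hn : 0 < n) :
    n ^ 2 ≤ #(fllBall 2 n 1 (altBlockWord n (Nat.sqrt (2 * n)))) + Nat.sqrt (2 * n) * n + n := by
  set m := Nat.sqrt (2 * n)
  have hm : 0 < m := Nat.sqrt_pos.mpr (by omega)
  have hball := le_card_fllBall_one_add_card_altPairs (altBlockWord n m)
  have haltPairs := card_altPairs_altBlockWord_le (n := n) hm
  rw [card_changes_altBlockWord] at hball
  set k := (n - 1) / m
  have hk : 2 * k ≤ m + 1 := by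
    have h1 : k * m ≤ n - 1 := Nat.div_mul_le_self _ _
    have h2 : 2 * n < (m + 1) ^ 2 := Nat.lt_succ_sqrt' _
    have h3 : k * m + 1 ≤ n := by omega
    refine Nat.le_of_lt_succ (Nat.lt_of_mul_lt_mul_left (a := m) ?_)
    nlinarith
  have hsplit : n * (n - 1 - k) + n * k + n = n ^ 2 := by
    have : k ≤ n - 1 := Nat.div_le_self _ _
    rw [← mul_add, ← Nat.mul_succ, Nat.sub_add_cancel this, sq]
    congr 1
    omega
  nlinarith

theorem le_card_fllBall_one_altBlockWord (hn : 0 < n) :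
    (n : ℝ) ^ 2 - n * √(2 * n) - n ≤ #(fllBall 2 n 1 (altBlockWord n (Nat.sqrt (2 * n)))) := by
  have hnat : ((n ^ 2 : ℕ) : ℝ) ≤ ((#(fllBall 2 n 1 (altBlockWord n (Nat.sqrt (2 * n))))
      + Nat.sqrt (2 * n) * n + n : ℕ) : ℝ) := by
    exact_mod_cast sq_le_card_fllBall_one_altBlockWord hn
  have hsqrt : (Nat.sqrt (2 * n) : ℝ) ≤ √(2 * n) := by
    exact_mod_cast Real.nat_sqrt_le_real_sqrt
  push_cast at hnat
  nlinarith

end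

end BinaryFLL

/-- The maximum size of a binary FLL `1`-ball is
`n² - √2·n^{3/2} + O(n)`. -/
theorem max_fll_ball_binary_asymptotic :
    ∃ C : ℝ, 0 < C ∧ ∃ N : ℕ, ∀ n : ℕ, N ≤ n →
      |(((Finset.univ.sup fun x : Fin n → Fin 2 => (fllBall 2 n 1 x).card) : ℕ) : ℝ)
          - ((n : ℝ) ^ 2 - Real.sqrt 2 * (n : ℝ) ^ ((3 : ℝ) / 2))| ≤ C * n := by
  refine ⟨3, by norm_num, 1, fun n hn => ?_⟩
  obtain ⟨x, -, hx⟩ := exists_mem_eq_sup univ univ_nonempty fun x : Fin n → Fin 2 =>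
    (fllBall 2 n 1 x).card
  have hupper := BinaryFLL.card_fllBall_one_le hn x
  have hlower := (BinaryFLL.le_card_fllBall_one_altBlockWord hn).trans
    (Nat.cast_le.mpr (le_sup (f := fun x : Fin n → Fin 2 => (fllBall 2 n 1 x).card) (mem_univ _)))
  rw [← hx] at hupper
  rw [sqrt_two_mul_rpow_three_halves (Nat.cast_nonneg n), abs_le]
  constructor <;> linarith
end

section
/- Let q ≥ 2 and n ≥ 2 be integers. For x drawn uniformly at random from Z_q^n, the expected value of the sum of the lengths of the maximal alternating segments of x satisfies E_x[ Σ_{i=1}^{A(x)} s_i ] = n + (n−2)·(q−1)(q−2)/q². -/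
open scoped Classical

/-!
Every position of a word lies in exactly one maximal alternating segment, except the interior
positions `t` where `x_{t-1}, x_t, x_{t+1}` are three distinct symbols: such a `t` is the common
endpoint of two segments, and two distinct segments never share more than one position. Hence
`Σ s_i = n + #{such t}`, and by linearity of expectation each of the `n - 2` interior positions
contributes the probability `(q - 1)(q - 2)/q²` that three uniform symbols are distinct.
-/

open Finset

section Alternation

variable {α : Type*} [Inhabited α] {l : List α} {i j i' j' i₁ j₁ i₂ j₂ t : ℕ}

/-- `l[s]!` reads `default` past the end, so `AltOn l i j` is meaningful only for
`j < l.length`. -/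
def AltOn (l : List α) (i j : ℕ) : Prop :=
  (∀ s, i ≤ s → s + 1 ≤ j → l[s]! ≠ l[s + 1]!) ∧ (∀ s, i ≤ s → s + 2 ≤ j → l[s]! = l[s + 2]!)

theorem altOn_self (l : List α) (i : ℕ) : AltOn l i i :=
  ⟨fun _ _ _ => by omega, fun _ _ _ => by omega⟩

theorem AltOn.mono (h : AltOn l i j) (hi : i ≤ i') (hj : j' ≤ j) : AltOn l i' j' :=
  ⟨fun s hs hsj => h.1 s (by omega) (by omega), fun s hs hsj => h.2 s (by omega) (by omega)⟩

def DistinctTripleAt (l : List α) (t : ℕ) : Prop :=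
  1 ≤ t ∧ t + 1 < l.length ∧ l[t - 1]! ≠ l[t]! ∧ l[t]! ≠ l[t + 1]! ∧ l[t - 1]! ≠ l[t + 1]!

theorem AltOn.sup_of_overlap (h₁ : AltOn l i₁ j₁) (h₂ : AltOn l i₂ j₂)
    (ht₁ : i₁ ≤ t) (ht₁' : t + 1 ≤ j₁) (ht₂ : i₂ ≤ t) (ht₂' : t + 1 ≤ j₂) :
    AltOn l (min i₁ i₂) (max j₁ j₂) := by
  refine ⟨fun s hs hsj => ?_, fun s hs hsj => ?_⟩
  · rcases (by omega : (i₁ ≤ s ∧ s + 1 ≤ j₁) ∨ (i₂ ≤ s ∧ s + 1 ≤ j₂)) with h | h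
    exacts [h₁.1 s h.1 h.2, h₂.1 s h.1 h.2]
  · rcases (by omega : (i₁ ≤ s ∧ s + 2 ≤ j₁) ∨ (i₂ ≤ s ∧ s + 2 ≤ j₂)) with h | h
    exacts [h₁.2 s h.1 h.2, h₂.2 s h.1 h.2]

theorem AltOn.sup_of_not_distinctTripleAt (h₁ : AltOn l i₁ j₁) (h₂ : AltOn l i₂ j₂)
    (ht₁ : i₁ ≤ t) (ht₁' : t ≤ j₁) (ht₂ : i₂ ≤ t) (ht₂' : t ≤ j₂) (hj : max j₁ j₂ < l.length)
    (hD : ¬DistinctTripleAt l t) : AltOn l (min i₁ i₂) (max j₁ j₂) := by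
  have hne : ∀ s, min i₁ i₂ ≤ s → s + 1 ≤ max j₁ j₂ → l[s]! ≠ l[s + 1]! := by
    intro s hs hsj
    rcases (by omega : (i₁ ≤ s ∧ s + 1 ≤ j₁) ∨ (i₂ ≤ s ∧ s + 1 ≤ j₂)) with h | h
    exacts [h₁.1 s h.1 h.2, h₂.1 s h.1 h.2]
  refine ⟨hne, fun s hs hsj => ?_⟩
  rcases (by omega : (i₁ ≤ s ∧ s + 2 ≤ j₁) ∨ (i₂ ≤ s ∧ s + 2 ≤ j₂) ∨ s + 1 = t) with h | h | rfl
  · exact h₁.2 s h.1 h.2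
  · exact h₂.2 s h.1 h.2
  · -- the only triple not inside one of the two blocks is the one centred at `t`
    by_contra hs₂
    exact hD ⟨by omega, by omega, by simpa using hne s hs (by omega),
      hne (s + 1) (by omega) hsj, by simpa using hs₂⟩

/-- Unlike `IsMaxAltSeg`, maximality is required against every larger block, not only the
one-step extensions. -/
def IsMaxAltOn (l : List α) (i j : ℕ) : Prop :=
  i ≤ j ∧ j < l.length ∧ AltOn l i j ∧
    ∀ i' j', i' ≤ i → j ≤ j' → j' < l.length → AltOn l i' j' → i' = i ∧ j' = j

theorem IsMaxAltOn.eq_of_altOn_sup (h₁ : IsMaxAltOn l i₁ j₁) (h₂ : IsMaxAltOn l i₂ j₂)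
    (h : AltOn l (min i₁ i₂) (max j₁ j₂)) : i₁ = i₂ ∧ j₁ = j₂ := by
  have e₁ := h₁.2.2.2 _ _ (min_le_left _ _) (le_max_left _ _) (max_lt h₁.2.1 h₂.2.1) h
  have e₂ := h₂.2.2.2 _ _ (min_le_right _ _) (le_max_right _ _) (max_lt h₁.2.1 h₂.2.1) h
  omega

theorem blockSeg_get (l : List α) (i j t : ℕ) (h : t < (blockSeg l i j).length) :
    (blockSeg l i j).get ⟨t, h⟩ = l[i + t]! := by
  simp only [blockSeg, List.length_take, List.length_drop] at h
  simp [blockSeg, getElem!_pos l (i + t) (by omega)]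

theorem isAltList_blockSeg_iff (hij : i ≤ j) (hj : j < l.length) :
    IsAltList (blockSeg l i j) ↔ AltOn l i j := by
  have hlen : (blockSeg l i j).length = j + 1 - i := by
    simp only [blockSeg, List.length_take, List.length_drop]; omega
  simp only [IsAltList, hlen, blockSeg_get]
  constructor
  · rintro ⟨h₁, h₂⟩
    refine ⟨fun s hs hsj => ?_, fun s hs hsj => ?_⟩ <;>
      obtain ⟨k, rfl⟩ := Nat.exists_eq_add_of_le hs
    · simpa [Nat.add_assoc] using h₁ k (by omega)
    · simpa [Nat.add_assoc] using h₂ k (by omega)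
  · rintro ⟨h₁, h₂⟩
    refine ⟨fun k hk => ?_, fun k hk => ?_⟩
    · simpa [Nat.add_assoc] using h₁ (i + k) (by omega) (by omega)
    · simpa [Nat.add_assoc] using h₂ (i + k) (by omega) (by omega)

theorem isMaxAltSeg_iff_isMaxAltOn : IsMaxAltSeg l i j ↔ IsMaxAltOn l i j := by
  constructor
  · rintro ⟨hij, hj, halt, hleft, hright⟩
    rw [isAltList_blockSeg_iff hij hj] at halt
    refine ⟨hij, hj, halt, fun i' j' hi' hj' hj'l h' => ⟨?_, ?_⟩⟩
    · by_contra hne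
      refine hleft.resolve_left (by omega) ?_
      rw [isAltList_blockSeg_iff (by omega) hj]
      exact h'.mono (by omega) hj'
    · by_contra hne
      refine hright.resolve_left (by omega) ?_
      rw [isAltList_blockSeg_iff (by omega) (by omega)]
      exact h'.mono hi' (by omega)
  · rintro ⟨hij, hj, halt, hmax⟩
    refine ⟨hij, hj, (isAltList_blockSeg_iff hij hj).2 halt, ?_, ?_⟩
    · refine or_iff_not_imp_left.2 fun hi h => ?_
      rw [isAltList_blockSeg_iff (by omega) hj] at h
      have := hmax _ _ (Nat.sub_le i 1) le_rfl hj h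
      omega
    · refine or_iff_not_imp_left.2 fun hj' h => ?_
      rw [isAltList_blockSeg_iff (by omega) (by omega)] at h
      have := hmax _ _ le_rfl (Nat.le_succ j) (by omega) h
      omega

theorem mem_maxAltSegs {p : ℕ × ℕ} : p ∈ maxAltSegs l ↔ IsMaxAltOn l p.1 p.2 := by
  simp only [maxAltSegs, mem_filter, mem_product, mem_range, isMaxAltSeg_iff_isMaxAltOn]
  exact ⟨And.right, fun h => ⟨⟨by have := h.1; have := h.2.1; omega, h.2.1⟩, h⟩⟩

/-- Take a longest alternating block containing `[i, j]`. -/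
theorem exists_mem_maxAltSegs_of_altOn (h : AltOn l i j) (hij : i ≤ j) (hj : j < l.length) :
    ∃ p ∈ maxAltSegs l, p.1 ≤ i ∧ j ≤ p.2 := by
  set S := (range l.length ×ˢ range l.length).filter
    fun p : ℕ × ℕ => p.1 ≤ i ∧ j ≤ p.2 ∧ AltOn l p.1 p.2
  have hS : ∀ p : ℕ × ℕ, p ∈ S ↔ p.2 < l.length ∧ p.1 ≤ i ∧ j ≤ p.2 ∧ AltOn l p.1 p.2 := by
    intro p
    simp only [S, mem_filter, mem_product, mem_range]
    exact ⟨fun h => ⟨h.1.2, h.2⟩, fun h => ⟨⟨by omega, h.1⟩, h.2⟩⟩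
  obtain ⟨p, hpS, hp⟩ :=
    S.exists_max_image (fun p => p.2 - p.1) ⟨(i, j), (hS _).2 ⟨hj, le_rfl, le_rfl, h⟩⟩
  obtain ⟨hpl, hpi, hpj, hpalt⟩ := (hS p).1 hpS
  refine ⟨p, mem_maxAltSegs.2 ⟨by omega, hpl, hpalt, fun i' j' hi' hj' hj'l h' => ?_⟩, hpi, hpj⟩
  have := hp (i', j') ((hS _).2 ⟨hj'l, by omega, by omega, h'⟩)
  omega

theorem card_filter_maxAltSegs_of_distinctTripleAt (hD : DistinctTripleAt l t) :
    #{p ∈ maxAltSegs l | p.1 ≤ t ∧ t ≤ p.2} = 2 := by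
  obtain ⟨ht₁, htl, h₀₁, h₁₂, h₀₂⟩ := hD
  have hleft : AltOn l (t - 1) t :=
    ⟨fun s _ _ => by rwa [show s = t - 1 by omega, Nat.sub_add_cancel ht₁], fun _ _ _ => by omega⟩
  have hright : AltOn l t (t + 1) :=
    ⟨fun s _ _ => by rwa [show s = t by omega], fun _ _ _ => by omega⟩
  obtain ⟨P, hP, hP₁, hP₂⟩ := exists_mem_maxAltSegs_of_altOn hleft (by omega) (by omega)
  obtain ⟨Q, hQ, hQ₁, hQ₂⟩ := exists_mem_maxAltSegs_of_altOn hright (by omega) htl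
  rw [mem_maxAltSegs] at hP hQ
  have hPQ : P ≠ Q := by
    rintro rfl
    have := hP.2.2.1.2 (t - 1) (by omega) (by omega)
    rw [show t - 1 + 2 = t + 1 by omega] at this
    exact h₀₂ this
  suffices {p ∈ maxAltSegs l | p.1 ≤ t ∧ t ≤ p.2} = {P, Q} by rw [this, card_pair hPQ]
  ext R
  simp only [mem_filter, mem_maxAltSegs, mem_insert, mem_singleton]
  constructor
  · rintro ⟨hR, hRt, htR⟩
    -- `R` is not the singleton block `{t}`, which extends to `[t - 1, t]`
    have hRne : R.1 ≤ t - 1 ∨ t + 1 ≤ R.2 := by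
      by_contra! hR'
      have := hR.2.2.2 (t - 1) t (by omega) (by omega) (by omega) hleft
      omega
    rcases hRne with hR' | hR'
    · left
      have := hR.eq_of_altOn_sup hP
        (hR.2.2.1.sup_of_overlap hP.2.2.1 hR' (by omega) hP₁ (by omega))
      exact Prod.ext this.1 this.2
    · right
      have := hR.eq_of_altOn_sup hQ (hR.2.2.1.sup_of_overlap hQ.2.2.1 hRt hR' hQ₁ hQ₂)
      exact Prod.ext this.1 this.2
  · rintro (rfl | rfl)
    exacts [⟨hP, by omega, hP₂⟩, ⟨hQ, hQ₁, by omega⟩]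

theorem card_filter_maxAltSegs_of_not_distinctTripleAt (ht : t < l.length)
    (hD : ¬DistinctTripleAt l t) : #{p ∈ maxAltSegs l | p.1 ≤ t ∧ t ≤ p.2} = 1 := by
  obtain ⟨P, hP, hP₁, hP₂⟩ := exists_mem_maxAltSegs_of_altOn (altOn_self l t) le_rfl ht
  rw [card_eq_one]
  refine ⟨P, eq_singleton_iff_unique_mem.2 ⟨mem_filter.2 ⟨hP, hP₁, hP₂⟩, fun R hR => ?_⟩⟩
  rw [mem_filter, mem_maxAltSegs] at hR
  rw [mem_maxAltSegs] at hP
  have := hR.1.eq_of_altOn_sup hP <| hR.1.2.2.1.sup_of_not_distinctTripleAt hP.2.2.1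
    hR.2.1 hR.2.2 hP₁ hP₂ (max_lt hR.1.2.1 hP.2.1) hD
  exact Prod.ext this.1 this.2

theorem segLenSum_eq_length_add_card_distinctTripleAt (l : List α) :
    segLenSum l = l.length + #{t ∈ range l.length | DistinctTripleAt l t} := by
  have hlen : ∀ p ∈ maxAltSegs l, p.2 + 1 - p.1 = #{t ∈ range l.length | p.1 ≤ t ∧ t ≤ p.2} := by
    intro p hp
    have hp := (mem_maxAltSegs.1 hp).2.1
    rw [show {t ∈ range l.length | p.1 ≤ t ∧ t ≤ p.2} = Icc p.1 p.2 by
      ext; simp only [mem_filter, mem_range, mem_Icc]; omega,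
      Nat.card_Icc]
  have hcount : ∀ t ∈ range l.length, #{p ∈ maxAltSegs l | p.1 ≤ t ∧ t ≤ p.2} =
      1 + if DistinctTripleAt l t then 1 else 0 := by
    intro t ht
    split_ifs with hD
    · exact card_filter_maxAltSegs_of_distinctTripleAt hD
    · exact card_filter_maxAltSegs_of_not_distinctTripleAt (mem_range.1 ht) hD
  rw [segLenSum, sum_congr rfl hlen]
  have := sum_card_bipartiteAbove_eq_sum_card_bipartiteBelow (s := maxAltSegs l)
    (t := range l.length) (r := fun p t => p.1 ≤ t ∧ t ≤ p.2)
  simp only [bipartiteAbove, bipartiteBelow] at this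
  rw [this, sum_congr rfl hcount, sum_add_distrib, card_filter]
  simp

end Alternation

theorem card_filter_injOn {ι β : Type*} [Fintype ι] [DecidableEq ι] [Fintype β] (s : Finset ι) :
    #{x : ι → β | Set.InjOn x s} =
      (Fintype.card β).descFactorial #s * Fintype.card β ^ (Fintype.card ι - #s) := by
  let e : {x : ι → β // Set.InjOn x s} ≃ (s ↪ β) × ({i // i ∉ s} → β) :=
    ((Equiv.piEquivPiSubtypeProd (· ∈ s) fun _ => β).subtypeEquiv fun x => by
        simp only [Set.injOn_iff_injective]; rfl).trans
      (Equiv.prodSubtypeFstEquivSubtypeProd.trans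
        ((Equiv.subtypeInjectiveEquivEmbedding _ _).prodCongr (Equiv.refl _)))
  rw [← Fintype.card_subtype, Fintype.card_congr e]
  simp [Fintype.card_embedding_eq, Fintype.card_subtype_compl]

section Counting

variable {β : Type*} [Inhabited β] {n t : ℕ}

theorem distinctTripleAt_ofFn_iff (x : Fin n → β) (ht : 1 ≤ t) (htn : t + 1 < n) :
    DistinctTripleAt (List.ofFn x) t ↔
      Set.InjOn x ↑({⟨t - 1, by omega⟩, ⟨t, by omega⟩, ⟨t + 1, htn⟩} : Finset (Fin n)) := by
  have hget : ∀ s (hs : s < n), (List.ofFn x)[s]! = x ⟨s, hs⟩ := fun s hs => by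
    simp [getElem!_pos (List.ofFn x) s (by simpa using hs)]
  simp only [DistinctTripleAt, List.length_ofFn, hget _ (show t - 1 < n by omega),
    hget _ (show t < n by omega), hget _ htn]
  rw [coe_insert, coe_pair, Set.injOn_insert (by simp [Fin.ext_iff]; omega), Set.injOn_pair,
    Set.image_pair]
  simp only [Set.mem_insert_iff, Set.mem_singleton_iff, Fin.ext_iff]
  have : t ≠ t + 1 := by omega
  tauto

variable [Fintype β]

theorem card_filter_distinctTripleAt_ofFn (ht : 1 ≤ t) (htn : t + 1 < n) :
    #{x : Fin n → β | DistinctTripleAt (List.ofFn x) t} =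
      (Fintype.card β - 1) * (Fintype.card β - 2) * Fintype.card β ^ (n - 2) := by
  rw [filter_congr fun x _ => distinctTripleAt_ofFn_iff x ht htn, card_filter_injOn,
    Fintype.card_fin]
  have h3 : #({⟨t - 1, by omega⟩, ⟨t, by omega⟩, ⟨t + 1, htn⟩} : Finset (Fin n)) = 3 :=
    card_eq_three.2 ⟨_, _, _, by simp [Fin.ext_iff]; omega, by simp [Fin.ext_iff],
      by simp [Fin.ext_iff], rfl⟩
  obtain ⟨m, rfl⟩ : ∃ m, n = m + 3 := ⟨n - 3, by omega⟩
  rw [h3, Nat.descFactorial_succ, Nat.descFactorial_succ, Nat.descFactorial_one,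
    show m + 3 - 3 = m by omega, show m + 3 - 2 = m + 1 by omega]
  ring

theorem sum_card_filter_distinctTripleAt_ofFn (n : ℕ) :
    ∑ x : Fin n → β, #{t ∈ range n | DistinctTripleAt (List.ofFn x) t} =
      (n - 2) * ((Fintype.card β - 1) * (Fintype.card β - 2) * Fintype.card β ^ (n - 2)) := by
  have hcount : ∀ t ∈ range n, #{x : Fin n → β | DistinctTripleAt (List.ofFn x) t} =
      if 1 ≤ t ∧ t + 1 < n then
        (Fintype.card β - 1) * (Fintype.card β - 2) * Fintype.card β ^ (n - 2) else 0 := by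
    intro t _
    split_ifs with h
    · exact card_filter_distinctTripleAt_ofFn h.1 h.2
    · rw [card_eq_zero, filter_eq_empty_iff]
      exact fun x _ hD => h ⟨hD.1, by simpa using hD.2.1⟩
  simp_rw [card_filter]
  rw [sum_comm]
  simp_rw [← card_filter]
  rw [sum_congr rfl hcount, ← sum_filter, sum_const, smul_eq_mul]
  congr 1
  rw [show {t ∈ range n | 1 ≤ t ∧ t + 1 < n} = Ioo 0 (n - 1) by
    ext; simp only [mem_filter, mem_range, mem_Ioo]; omega, Nat.card_Ioo]
  omega

end Counting

/-- For `q ≥ 2`, `n ≥ 2`, the expected total length of the maximal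
alternating segments of a uniform `x ∈ Z_q^n` is `n + (n-2)(q-1)(q-2)/q²`. -/
theorem expected_segLenSum (q n : ℕ) (hq : 2 ≤ q) (hn : 2 ≤ n) :
    (∑ x : Fin n → Fin q, (segLenSum (List.ofFn x) : ℚ)) / (q : ℚ) ^ n =
      (n : ℚ) + ((n : ℚ) - 2) * (((q : ℚ) - 1) * ((q : ℚ) - 2)) / (q : ℚ) ^ 2 := by
  have : Inhabited (Fin q) := ⟨⟨0, by omega⟩⟩
  have htotal : ∑ x : Fin n → Fin q, segLenSum (List.ofFn x) =
      n * q ^ n + (n - 2) * ((q - 1) * (q - 2) * q ^ (n - 2)) := by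
    simp only [segLenSum_eq_length_add_card_distinctTripleAt, List.length_ofFn, sum_add_distrib,
      sum_card_filter_distinctTripleAt_ofFn, sum_const, card_univ, Fintype.card_fun,
      Fintype.card_fin, smul_eq_mul]
    ring
  have hpow : (q : ℚ) ^ n = (q : ℚ) ^ (n - 2) * (q : ℚ) ^ 2 := by
    rw [← pow_add, Nat.sub_add_cancel hn]
  rw [← Nat.cast_sum, htotal]
  push_cast [Nat.cast_sub hn, Nat.cast_sub (by omega : 1 ≤ q), Nat.cast_sub hq]
  rw [hpow]
  field_simp
end

section
/- Let q ≥ 2 and n ≥ 2 be integers, and let s be an integer with 2 ≤ s ≤ n−1. Then χ(s) = 2(q−1)²·q^{n−s} + (n−s−1)(q−1)³·q^{n−s−1}. -/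
open scoped Classical

/-
Count the pairs (word, segment) by the start `i` of the segment. For `s ≥ 2`, the block
`[i, i + s - 1]` is a maximal alternating segment of `x` exactly when `x` reads `a b a b ⋯`
on it for some `a ≠ b`, the letter just before it (if any) differs from `b`, and the letter
just after it (if any) differs from the one two places back. For fixed `(a, b)` these are
constraints on single coordinates, so the words are a product set: each of the `q (q - 1)`
pairs gives one choice inside the block, `q - 1` at each existing neighbour and `q` elsewhere.
Summing over `i`, the two extreme starts have one neighbour and the `n - s - 1` others two.
-/

open Finset

namespace MaxAltSeg

variable {α : Type*}

def altLetter (a b : α) (k : ℕ) : α := if k % 2 = 0 then a else b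

@[simp] lemma altLetter_zero (a b : α) : altLetter a b 0 = a := rfl

@[simp] lemma altLetter_one (a b : α) : altLetter a b 1 = b := rfl

lemma altLetter_succ (a b : α) (k : ℕ) : altLetter a b (k + 1) = altLetter b a k := by
  unfold altLetter
  rcases Nat.mod_two_eq_zero_or_one k with h | h <;> simp [h, Nat.succ_mod_two_eq_zero_iff]

lemma altLetter_add_two (a b : α) (k : ℕ) : altLetter a b (k + 2) = altLetter a b k := by
  rw [altLetter_succ, altLetter_succ]

lemma altLetter_ne_succ {a b : α} (hab : a ≠ b) (k : ℕ) :
    altLetter a b k ≠ altLetter a b (k + 1) := by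
  unfold altLetter
  rcases Nat.mod_two_eq_zero_or_one k with h | h <;>
    simp [h, Nat.succ_mod_two_eq_zero_iff, hab, hab.symm]

lemma isAltList_iff {l : List α} (hl : 2 ≤ l.length) :
    IsAltList l ↔ l[0] ≠ l[1] ∧ ∀ k (hk : k < l.length), l[k] = altLetter l[0] l[1] k := by
  constructor
  · rintro ⟨hne, hper⟩
    refine ⟨hne 0 hl, fun k => ?_⟩
    induction k using Nat.strong_induction_on with
    | _ k ih =>
      intro hk
      match k with
      | 0 => rfl
      | 1 => rfl
      | k + 2 => rw [altLetter_add_two, ← ih k (by omega) (by omega)]; exact (hper k hk).symm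
  · rintro ⟨hne, hval⟩
    refine ⟨fun k hk => ?_, fun k hk => ?_⟩
    · rw [List.get_eq_getElem, List.get_eq_getElem, hval k, hval (k + 1)]
      exact altLetter_ne_succ hne k
    · rw [List.get_eq_getElem, List.get_eq_getElem, hval k, hval (k + 2), altLetter_add_two]

lemma length_blockSeg {l : List α} {i j : ℕ} (hij : i ≤ j) (hj : j < l.length) :
    (blockSeg l i j).length = j + 1 - i := by
  simp only [blockSeg, List.length_take, List.length_drop]
  omega

lemma getElem_blockSeg {l : List α} {i j k : ℕ} (hk : k < (blockSeg l i j).length) :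
    (blockSeg l i j)[k] = l[i + k]'(by simp [blockSeg] at hk; omega) := by
  simp only [blockSeg, List.getElem_take, List.getElem_drop]

lemma isAltList_blockSeg_iff {l : List α} {i j : ℕ} (hij : i < j) (hj : j < l.length) :
    IsAltList (blockSeg l i j) ↔ l[i] ≠ l[i + 1] ∧
      ∀ k, i ≤ k → ∀ hkj : k ≤ j, l[k] = altLetter l[i] l[i + 1] (k - i) := by
  have hlen := length_blockSeg hij.le hj
  rw [isAltList_iff (by omega)]
  simp only [getElem_blockSeg, Nat.add_zero]
  refine and_congr_right fun _ => ⟨fun h k hik hkj => ?_, fun h k hk => ?_⟩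
  · simpa only [Nat.add_sub_cancel' hik] using h (k - i) (by omega)
  · rw [h (i + k) (by omega) (by omega), Nat.add_sub_cancel_left]

lemma isAltList_blockSeg_pred_iff {l : List α} {i j : ℕ} (hi : 0 < i) (hij : i < j)
    (hj : j < l.length) (halt : IsAltList (blockSeg l i j)) :
    IsAltList (blockSeg l (i - 1) j) ↔ l[i - 1] = l[i + 1] := by
  obtain ⟨hne, hval⟩ := (isAltList_blockSeg_iff hij hj).1 halt
  rw [isAltList_blockSeg_iff (by omega) hj]
  simp only [Nat.sub_add_cancel hi]
  constructor
  · rintro ⟨-, h⟩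
    rw [h (i + 1) (by omega) (by omega), show i + 1 - (i - 1) = 2 by omega, altLetter_add_two,
      altLetter_zero]
  · intro h
    refine ⟨h ▸ hne.symm, fun k hik hkj => ?_⟩
    rcases Nat.eq_or_lt_of_le hik with rfl | hik
    · simp
    · rw [hval k (by omega) hkj, show k - (i - 1) = k - i + 1 by omega, altLetter_succ, h]

lemma isAltList_blockSeg_succ_iff {l : List α} {i j : ℕ} (hij : i < j)
    (hj : j + 1 < l.length) (halt : IsAltList (blockSeg l i j)) :
    IsAltList (blockSeg l i (j + 1)) ↔ l[j + 1] = l[j - 1] := by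
  obtain ⟨hne, hval⟩ := (isAltList_blockSeg_iff hij (by omega)).1 halt
  have hprev := hval (j - 1) (by omega) (by omega)
  have hshift : j + 1 - i = j - 1 - i + 2 := by omega
  rw [isAltList_blockSeg_iff (by omega) hj]
  constructor
  · rintro ⟨-, h⟩
    rw [h (j + 1) (by omega) le_rfl, hprev, hshift, altLetter_add_two]
  · intro h
    refine ⟨hne, fun k hik hkj => ?_⟩
    rcases Nat.eq_or_lt_of_le hkj with rfl | hkj
    · rw [h, hprev, hshift, altLetter_add_two]
    · exact hval k hik (by omega)

/-- The letters that may stand at position `k` of a word in which `[i, j]` is a maximal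
alternating segment reading `a b a b ⋯`. -/
def SegmentAllowed (a b : α) (i j k : ℕ) (c : α) : Prop :=
  (i ≤ k → k ≤ j → c = altLetter a b (k - i)) ∧ (k + 1 = i → c ≠ b) ∧
    (k = j + 1 → c ≠ altLetter a b (j - 1 - i))

lemma SegmentAllowed.eq_left {a b c : α} {i j : ℕ} (h : SegmentAllowed a b i j i c)
    (hij : i ≤ j) : c = a := by
  simpa using h.1 le_rfl hij

lemma SegmentAllowed.eq_right {a b c : α} {i j : ℕ} (h : SegmentAllowed a b i j (i + 1) c)
    (hij : i < j) : c = b := by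
  simpa using h.1 (by omega) hij

lemma isMaxAltSeg_iff {l : List α} {i j : ℕ} (hij : i < j) (hj : j < l.length) :
    IsMaxAltSeg l i j ↔
      ∃ a b, a ≠ b ∧ ∀ k (hk : k < l.length), SegmentAllowed a b i j k l[k] := by
  simp only [IsMaxAltSeg, hij.le, hj, true_and]
  constructor
  · rintro ⟨halt, hleft, hright⟩
    obtain ⟨hne, hval⟩ := (isAltList_blockSeg_iff hij hj).1 halt
    refine ⟨_, _, hne, fun k hk => ⟨hval k, fun hki => ?_, fun hkj => ?_⟩⟩
    · subst hki
      have := hleft.resolve_left (by omega)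
      rwa [isAltList_blockSeg_pred_iff (by omega) hij hj halt] at this
    · subst hkj
      have := hright.resolve_left (by omega)
      rw [isAltList_blockSeg_succ_iff hij hk halt, hval (j - 1) (by omega) (by omega)] at this
      exact this
  · rintro ⟨a, b, hab, hallowed⟩
    have ha : l[i] = a := (hallowed i (by omega)).eq_left hij.le
    have hb : l[i + 1] = b := (hallowed (i + 1) (by omega)).eq_right hij
    have halt : IsAltList (blockSeg l i j) := by
      refine (isAltList_blockSeg_iff hij hj).2 ⟨ha ▸ hb ▸ hab, fun k hik hkj => ?_⟩
      rw [ha, hb]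
      exact (hallowed k (by omega)).1 hik hkj
    refine ⟨halt, ?_, ?_⟩
    · rcases Nat.eq_zero_or_pos i with hi | hi
      · exact Or.inl hi
      · rw [isAltList_blockSeg_pred_iff hi hij hj halt, hb]
        exact Or.inr ((hallowed (i - 1) (by omega)).2.1 (by omega))
    · rcases Nat.lt_or_ge (j + 1) l.length with hj' | hj'
      · rw [isAltList_blockSeg_succ_iff hij hj' halt,
          (hallowed (j - 1) (by omega)).1 (by omega) (by omega)]
        exact Or.inr ((hallowed (j + 1) hj').2.2 rfl)
      · exact Or.inl (by omega)

lemma card_filter_maxAltSegs_eq (l : List α) {s : ℕ} (hs : 1 ≤ s) :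
    #{p ∈ maxAltSegs l | p.2 + 1 - p.1 = s} =
      #{i ∈ range (l.length + 1 - s) | IsMaxAltSeg l i (i + s - 1)} := by
  refine card_nbij' Prod.fst (fun i => (i, i + s - 1)) ?_ ?_ ?_ ?_
  · rintro ⟨i, j⟩ hp
    simp only [maxAltSegs, mem_coe, mem_filter, mem_product, mem_range] at hp ⊢
    obtain ⟨⟨-, hseg⟩, rfl⟩ := hp
    refine ⟨by have := hseg.2.1; omega, ?_⟩
    rwa [show i + (j + 1 - i) - 1 = j by have := hseg.1; omega]
  · intro i hi
    simp only [maxAltSegs, mem_coe, mem_filter, mem_product, mem_range] at hi ⊢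
    exact ⟨⟨⟨by omega, by omega⟩, hi.2⟩, by omega⟩
  · rintro ⟨i, j⟩ hp
    simp only [maxAltSegs, mem_coe, mem_filter, mem_product, mem_range] at hp
    simp only [Prod.mk.injEq, true_and]
    have := hp.1.2.1
    omega
  · intro i _
    rfl

/-- The number of ways to fill `m` positions on one side of a maximal alternating segment:
the letter adjacent to the segment must avoid one symbol, the others are free. -/
def flankCount (q m : ℕ) : ℕ := if m = 0 then 1 else (q - 1) * q ^ (m - 1)

@[simp] lemma flankCount_zero (q : ℕ) : flankCount q 0 = 1 := rfl

@[simp] lemma flankCount_succ (q m : ℕ) : flankCount q (m + 1) = (q - 1) * q ^ m := rfl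

lemma prod_range_ite_last_eq_flankCount (q m : ℕ) :
    ∏ k ∈ range m, (if k + 1 = m then q - 1 else q) = flankCount q m := by
  rcases m with _ | m
  · rfl
  · rw [prod_range_succ, if_pos rfl, prod_congr rfl fun k hk => if_neg (by simp at hk; omega),
      prod_const, card_range, flankCount_succ, mul_comm]

lemma prod_range_ite_first_eq_flankCount (q m : ℕ) :
    ∏ k ∈ range m, (if k = 0 then q - 1 else q) = flankCount q m := by
  rcases m with _ | m
  · rfl
  · rw [prod_range_succ', if_pos rfl, prod_congr rfl fun k _ => if_neg k.succ_ne_zero,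
      prod_const, card_range, flankCount_succ, mul_comm]

lemma mul_sum_range_flankCount_mul_flankCount {q t : ℕ} (ht : 1 ≤ t) :
    q * (q - 1) * ∑ i ∈ range (t + 1), flankCount q i * flankCount q (t - i) =
      2 * (q - 1) ^ 2 * q ^ t + (t - 1) * (q - 1) ^ 3 * q ^ (t - 1) := by
  obtain ⟨u, rfl⟩ : ∃ u, t = u + 1 := ⟨t - 1, by omega⟩
  have hinner : ∀ i ∈ range u, flankCount q (i + 1) * flankCount q (u + 1 - (i + 1)) =
      (q - 1) ^ 2 * q ^ (u - 1) := by
    intro i hi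
    rw [mem_range] at hi
    obtain ⟨v, hv⟩ : ∃ v, u - i = v + 1 := ⟨u - i - 1, by omega⟩
    rw [show u + 1 - (i + 1) = v + 1 by omega, flankCount_succ, flankCount_succ,
      show u - 1 = i + v by omega, pow_add]
    ring
  rw [sum_range_succ, sum_range_succ', sum_congr rfl hinner, sum_const, card_range, smul_eq_mul,
    Nat.add_sub_cancel, Nat.sub_self, Nat.sub_zero, flankCount_zero, flankCount_succ]
  rcases u with _ | v
  · simp only [zero_mul, add_zero]
    ring
  · simp only [Nat.add_sub_cancel, pow_succ]
    ring

section Counting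

variable [Fintype α]

lemma card_segmentAllowed (a b : α) {i j : ℕ} (hij : i ≤ j) (k : ℕ) :
    #{c | SegmentAllowed a b i j k c} =
      if i ≤ k ∧ k ≤ j then 1
      else if k + 1 = i ∨ k = j + 1 then Fintype.card α - 1 else Fintype.card α := by
  split_ifs with hcore hflank
  · rw [show ({c | SegmentAllowed a b i j k c} : Finset α) = {altLetter a b (k - i)} by
      ext c; simp [SegmentAllowed, hcore, show k + 1 ≠ i by omega, show k ≠ j + 1 by omega],
      card_singleton]
  · rcases hflank with hk | hk
    · rw [show ({c | SegmentAllowed a b i j k c} : Finset α) = {b}ᶜ by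
        ext c; simp [SegmentAllowed, hk, show ¬ k = j + 1 by omega, show ¬ i ≤ k by omega],
        card_compl, card_singleton]
    · rw [show ({c | SegmentAllowed a b i j k c} : Finset α) = {altLetter a b (j - 1 - i)}ᶜ by
        ext c; simp [SegmentAllowed, hk, show ¬ j + 1 + 1 = i by omega],
        card_compl, card_singleton]
  · rw [show ({c | SegmentAllowed a b i j k c} : Finset α) = univ by
      ext c
      simp only [mem_filter, mem_univ, true_and, iff_true]
      exact ⟨fun h₁ h₂ => absurd ⟨h₁, h₂⟩ hcore, fun h => absurd (.inl h) hflank,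
        fun h => absurd (.inr h) hflank⟩, card_univ]

lemma prod_card_segmentAllowed (a b : α) {i s n : ℕ} (hs : 2 ≤ s) (hn : i + s ≤ n) :
    ∏ k : Fin n, #{c | SegmentAllowed a b i (i + s - 1) k c} =
      flankCount (Fintype.card α) i * flankCount (Fintype.card α) (n - (i + s)) := by
  obtain ⟨r, rfl⟩ : ∃ r, n = i + s + r := ⟨n - (i + s), by omega⟩
  have hcard := card_segmentAllowed a b (i := i) (j := i + s - 1) (by omega)
  have hcore : ∏ k ∈ range s, #{c | SegmentAllowed a b i (i + s - 1) (i + k) c} = 1 :=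
    prod_eq_one fun k hk => by rw [hcard, if_pos (by simp at hk; omega)]
  rw [Fin.prod_univ_eq_prod_range (fun k => #{c | SegmentAllowed a b i (i + s - 1) k c}),
    prod_range_add, prod_range_add, hcore, mul_one, Nat.add_sub_cancel_left,
    ← prod_range_ite_last_eq_flankCount, ← prod_range_ite_first_eq_flankCount]
  congr 1 <;> refine prod_congr rfl fun k hk => ?_ <;> rw [mem_range] at hk <;>
    rw [hcard] <;> split_ifs <;> omega

theorem card_filter_isMaxAltSeg_ofFn {i s n : ℕ} (hs : 2 ≤ s) (hn : i + s ≤ n) :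
    #{x : Fin n → α | IsMaxAltSeg (List.ofFn x) i (i + s - 1)} =
      Fintype.card α * (Fintype.card α - 1) *
        (flankCount (Fintype.card α) i * flankCount (Fintype.card α) (n - (i + s))) := by
  have hsegs : ({x : Fin n → α | IsMaxAltSeg (List.ofFn x) i (i + s - 1)} : Finset _) =
      (univ : Finset α).offDiag.biUnion fun p =>
        Fintype.piFinset fun k : Fin n => {c | SegmentAllowed p.1 p.2 i (i + s - 1) k c} := by
    ext x
    rw [mem_filter, isMaxAltSeg_iff (by omega) (by rw [List.length_ofFn]; omega)]
    simp only [mem_univ, true_and, mem_biUnion, mem_offDiag, Fintype.mem_piFinset, mem_filter,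
      List.length_ofFn, List.getElem_ofFn, Prod.exists, Fin.forall_iff]
  have hdisjoint : ((univ : Finset α).offDiag : Set (α × α)).PairwiseDisjoint fun p =>
      Fintype.piFinset fun k : Fin n => {c | SegmentAllowed p.1 p.2 i (i + s - 1) k c} := by
    intro p _ p' _ hne
    refine disjoint_left.2 fun x hx hx' => hne ?_
    simp only [Fintype.mem_piFinset, mem_filter, mem_univ, true_and] at hx hx'
    have hi := (hx ⟨i, by omega⟩).eq_left (by omega)
    have hi' := (hx' ⟨i, by omega⟩).eq_left (by omega)
    have hsucc := (hx ⟨i + 1, by omega⟩).eq_right (by omega)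
    have hsucc' := (hx' ⟨i + 1, by omega⟩).eq_right (by omega)
    exact Prod.ext (hi.symm.trans hi') (hsucc.symm.trans hsucc')
  rw [hsegs, card_biUnion hdisjoint,
    sum_congr rfl fun p _ => by rw [Fintype.card_piFinset, prod_card_segmentAllowed _ _ hs hn],
    sum_const, offDiag_card, card_univ, smul_eq_mul, ← Nat.mul_sub_one]

end Counting

theorem chi_eq_sum_card_filter_isMaxAltSeg (q n : ℕ) {s : ℕ} (hs : 1 ≤ s) :
    chi q n s = ∑ i ∈ range (n + 1 - s),
      #{x : Fin n → Fin q | IsMaxAltSeg (List.ofFn x) i (i + s - 1)} := by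
  simp only [chi, card_filter_maxAltSegs_eq _ hs, List.length_ofFn, card_filter]
  exact sum_comm

end MaxAltSeg

theorem chi_formula_general (q n s : ℕ) (hs1 : 2 ≤ s) (hs2 : s ≤ n - 1) :
    chi q n s =
      2 * (q - 1) ^ 2 * q ^ (n - s) + (n - s - 1) * (q - 1) ^ 3 * q ^ (n - s - 1) := by
  rw [MaxAltSeg.chi_eq_sum_card_filter_isMaxAltSeg q n (by omega),
    show n + 1 - s = n - s + 1 by omega,
    ← MaxAltSeg.mul_sum_range_flankCount_mul_flankCount (by omega), mul_sum]
  refine sum_congr rfl fun i hi => ?_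
  rw [mem_range] at hi
  rw [MaxAltSeg.card_filter_isMaxAltSeg_ofFn hs1 (by omega), Fintype.card_fin,
    show n - (i + s) = n - s - i by omega]

/-- For `2 ≤ s ≤ n-1`, the total number of maximal alternating
segments of length `s` over all `x ∈ Z_q^n` is
`2(q-1)²q^{n-s} + (n-s-1)(q-1)³q^{n-s-1}`. -/
theorem chi_formula (q n s : ℕ) (hq : 2 ≤ q) (hn : 2 ≤ n) (hs1 : 2 ≤ s)
    (hs2 : s ≤ n - 1) :
    chi q n s =
      2 * (q - 1) ^ 2 * q ^ (n - s) + (n - s - 1) * (q - 1) ^ 3 * q ^ (n - s - 1) :=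
  chi_formula_general q n s hs1 hs2
end

section
/- Let q ≥ 2 and n ≥ 2 be integers. For x drawn uniformly at random from Z_q^n, the expected value of the sum of the squared lengths of the maximal alternating segments of x satisfies E_x[ Σ_{i=1}^{A(x)} s_i² ] = n(4q²−3q+2)/q² + (6q−4)/q² − 4 − (2/(q−1))·(1 − 1/q^{n−1}). -/
open scoped Classical

/-!
Σ s_i² counts the ordered pairs (a, b) of positions lying in a common maximal alternating
segment. For a < b there is such a segment iff x_a ⋯ x_b is alternating, and then exactly one,
because two alternating blocks sharing two consecutive positions glue to one. A single position
a lies in two maximal segments iff x_{a-1}, x_a, x_{a+1} are pairwise distinct, and in one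
otherwise. Hence Σ s_i² = n + #{overlap positions} + 2 #{a < b : x_a ⋯ x_b alternating}.
Resampling one coordinate at a time, x_a ⋯ x_b is alternating with probability (q-1)/q^(b-a)
and an interior position is an overlap with probability (q-1)(q-2)/q², which sums to the formula.
-/

theorem Finset.sq_sum_range {R : Type*} [CommSemiring R] (g : ℕ → R) (n : ℕ) :
    (∑ a ∈ Finset.range n, g a) ^ 2
      = ∑ a ∈ Finset.range n, g a ^ 2
        + 2 * ∑ b ∈ Finset.range n, ∑ a ∈ Finset.range b, g a * g b := by
  induction n with
  | zero => simp
  | succ n ih =>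
    simp only [Finset.sum_range_succ, add_sq, ih, ← Finset.sum_mul]
    ring

-- `(x, c) ↦ (update x j c, x j)` matches the pairs counted on the two sides.
theorem Finset.card_filter_apply_mul_card {ι β : Type*} [Fintype ι] [DecidableEq ι] [Fintype β]
    (j : ι) (Q : (ι → β) → β → Prop) [DecidablePred fun x => Q x (x j)]
    [∀ x, DecidablePred (Q x)]
    (hQ : ∀ x c d, Q (Function.update x j c) d ↔ Q x d) :
    (Finset.univ.filter fun x => Q x (x j)).card * Fintype.card β
      = ∑ x, (Finset.univ.filter fun c => Q x c).card := by
  rw [← Finset.card_univ, ← Finset.card_product, ← Finset.card_sigma]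
  refine Finset.card_nbij' (fun xc => ⟨Function.update xc.1 j xc.2, xc.1 j⟩)
    (fun yd => (Function.update yd.1 j yd.2, yd.1 j)) ?_ ?_ ?_ ?_
  · rintro ⟨x, c⟩ hx
    simp only [Finset.coe_product, Set.mem_prod, Finset.mem_coe, Finset.mem_filter,
      Finset.mem_univ, true_and, and_true] at hx
    simpa [hQ] using hx
  · rintro ⟨y, d⟩ hy
    simp only [Finset.coe_sigma, Set.mem_sigma_iff, Finset.mem_coe, Finset.mem_filter,
      Finset.mem_univ, true_and] at hy
    simpa [hQ] using hy
  · rintro ⟨x, c⟩ -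
    simp
  · rintro ⟨y, d⟩ -
    simp

theorem Finset.sum_range_sub_one_div_pow {K : Type*} [Field K] {x : K} (hx : x ≠ 0) (b : ℕ) :
    ∑ a ∈ Finset.range b, (x - 1) / x ^ (b - a) = 1 - 1 / x ^ b := by
  rw [← Finset.sum_range_reflect]
  calc ∑ a ∈ Finset.range b, (x - 1) / x ^ (b - (b - 1 - a))
      = ∑ a ∈ Finset.range b, (1 / x ^ a - 1 / x ^ (a + 1)) := by
        refine Finset.sum_congr rfl fun a ha => ?_
        rw [show b - (b - 1 - a) = a + 1 by have := Finset.mem_range.1 ha; omega]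
        field_simp
        ring
    _ = 1 - 1 / x ^ b := by rw [Finset.sum_range_sub']; simp

namespace AltSeg

section Segments

variable {α : Type*} {f g : ℕ → α} {n u v i j a b : ℕ}

-- A list `l` enters as the word `l[·]? : ℕ → Option α`, which is `none` past its end.
def AltOn (f : ℕ → α) (u v : ℕ) : Prop :=
  (∀ k, u ≤ k → k < v → f k ≠ f (k + 1)) ∧
    (∀ k, u ≤ k → k + 2 ≤ v → f k = f (k + 2))

theorem AltOn.mono {u' v' : ℕ} (h : AltOn f u v) (hu : u ≤ u') (hv : v' ≤ v) :
    AltOn f u' v' :=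
  ⟨fun k hk hk' => h.1 k (hu.trans hk) (hk'.trans_le hv),
   fun k hk hk' => h.2 k (hu.trans hk) (hk'.trans hv)⟩

theorem AltOn.union {u' v' : ℕ} (h : AltOn f u v) (h' : AltOn f u' v')
    (hov : max u u' < min v v') : AltOn f (min u u') (max v v') := by
  constructor
  · intro k hk hk'
    by_cases hkv : u ≤ k ∧ k < v
    · exact h.1 k hkv.1 hkv.2
    · exact h'.1 k (by omega) (by omega)
  · intro k hk hk'
    by_cases hkv : u ≤ k ∧ k + 2 ≤ v
    · exact h.2 k hkv.1 hkv.2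
    · exact h'.2 k (by omega) (by omega)

theorem altOn_self (f : ℕ → α) (u : ℕ) : AltOn f u u :=
  ⟨fun _ h1 h2 => by omega, fun _ h1 h2 => by omega⟩

theorem altOn_succ_iff : AltOn f u (u + 1) ↔ f u ≠ f (u + 1) := by
  refine ⟨fun h => h.1 u le_rfl u.lt_succ_self,
    fun h => ⟨fun k hk hk' => ?_, fun k _ _ => by omega⟩⟩
  obtain rfl : k = u := by omega
  exact h

theorem altOn_congr (h : ∀ k ≤ v, f k = g k) : AltOn f u v ↔ AltOn g u v := by
  unfold AltOn
  refine and_congr (forall_congr' fun k => ?_) (forall_congr' fun k => ?_)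
  · refine imp_congr_right fun _ => imp_congr_right fun hk => ?_
    rw [h k (by omega), h (k + 1) hk]
  · refine imp_congr_right fun _ => imp_congr_right fun hk => ?_
    rw [h k (by omega), h (k + 2) hk]

theorem altOn_succ_right_iff (huv : u < v) :
    AltOn f u (v + 1) ↔ AltOn f u v ∧ f (v + 1) = f (v - 1) := by
  refine ⟨fun h => ⟨h.mono le_rfl v.le_succ, ?_⟩,
    fun ⟨h, hv⟩ => ⟨fun k hk hk' => ?_, fun k hk hk' => ?_⟩⟩
  · have := h.2 (v - 1) (by omega) (by omega)
    rwa [show v - 1 + 2 = v + 1 by omega, eq_comm] at this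
  · rcases Nat.lt_or_ge k v with hkv | hkv
    · exact h.1 k hk hkv
    · obtain rfl : k = v := by omega
      have := h.1 (k - 1) (by omega) (by omega)
      rw [show k - 1 + 1 = k by omega] at this
      rw [hv]
      exact this.symm
  · rcases Nat.lt_or_ge (k + 2) (v + 1) with hkv | hkv
    · exact h.2 k hk (by omega)
    · obtain rfl : k = v - 1 := by omega
      rw [show v - 1 + 2 = v + 1 by omega, hv]

def IsMaxAltOn (f : ℕ → α) (n i j : ℕ) : Prop :=
  i ≤ j ∧ j < n ∧ AltOn f i j ∧
    (0 < i → ¬ AltOn f (i - 1) j) ∧ (j + 1 < n → ¬ AltOn f i (j + 1))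

noncomputable def altSegs (f : ℕ → α) (n : ℕ) : Finset (ℕ × ℕ) :=
  (Finset.range n ×ˢ Finset.range n).filter fun p => IsMaxAltOn f n p.1 p.2

theorem mem_altSegs {p : ℕ × ℕ} : p ∈ altSegs f n ↔ IsMaxAltOn f n p.1 p.2 := by
  simp only [altSegs, Finset.mem_filter, Finset.mem_product, Finset.mem_range,
    and_iff_right_iff_imp]
  exact fun h => ⟨h.1.trans_lt h.2.1, h.2.1⟩

theorem isAltList_blockSeg_iff {l : List α} (huv : u ≤ v) (hv : v < l.length) :
    IsAltList (blockSeg l u v) ↔ AltOn (l[·]?) u v := by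
  have hlen : (blockSeg l u v).length = v + 1 - u := by simp [blockSeg]; omega
  have hget : ∀ k (hk : k < (blockSeg l u v).length), some (blockSeg l u v)[k] = l[u + k]? := by
    intro k hk
    simp [blockSeg]
  have heq : ∀ k k' (hk : k < (blockSeg l u v).length) (hk' : k' < (blockSeg l u v).length),
      (blockSeg l u v)[k] = (blockSeg l u v)[k'] ↔ l[u + k]? = l[u + k']? := by
    intro k k' hk hk'
    rw [← hget k hk, ← hget k' hk', Option.some_inj]
  simp only [IsAltList, AltOn, List.get_eq_getElem]
  constructor
  · rintro ⟨h1, h2⟩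
    refine ⟨fun k hk hk' => ?_, fun k hk hk' => ?_⟩
    · have := (heq _ _ _ _).not.mp (h1 (k - u) (by omega))
      rwa [show u + (k - u) = k by omega, show u + (k - u + 1) = k + 1 by omega] at this
    · have := (heq _ _ _ _).mp (h2 (k - u) (by omega))
      rwa [show u + (k - u) = k by omega, show u + (k - u + 2) = k + 2 by omega] at this
  · rintro ⟨h1, h2⟩
    refine ⟨fun k hk => (heq _ _ _ _).not.mpr ?_, fun k hk => (heq _ _ _ _).mpr ?_⟩
    · exact h1 (u + k) (by omega) (by omega)
    · exact h2 (u + k) (by omega) (by omega)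

theorem isMaxAltSeg_iff {l : List α} : IsMaxAltSeg l i j ↔ IsMaxAltOn (l[·]?) l.length i j := by
  by_cases hij : i ≤ j
  swap; · simp [IsMaxAltSeg, IsMaxAltOn, hij]
  by_cases hj : j < l.length
  swap; · simp [IsMaxAltSeg, IsMaxAltOn, hj]
  have hleft : (i = 0 ∨ ¬ IsAltList (blockSeg l (i - 1) j)) ↔
      (0 < i → ¬ AltOn (l[·]?) (i - 1) j) := by
    rw [isAltList_blockSeg_iff (by omega) hj, or_iff_not_imp_left, Nat.pos_iff_ne_zero]
  have hright : (j = l.length - 1 ∨ ¬ IsAltList (blockSeg l i (j + 1))) ↔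
      (j + 1 < l.length → ¬ AltOn (l[·]?) i (j + 1)) := by
    by_cases hj1 : j + 1 < l.length
    · rw [isAltList_blockSeg_iff (by omega) hj1]
      simp only [hj1, forall_const, show j ≠ l.length - 1 by omega, false_or]
    · simp only [hj1, IsEmpty.forall_iff, iff_true]
      omega
  rw [IsMaxAltSeg, IsMaxAltOn, isAltList_blockSeg_iff hij hj, hleft, hright]

theorem maxAltSegs_eq_altSegs (l : List α) : maxAltSegs l = altSegs (l[·]?) l.length :=
  Finset.filter_congr fun _ _ => isMaxAltSeg_iff

theorem exists_isMaxAltOn (huv : u ≤ v) (hv : v < n) (h : AltOn f u v) :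
    ∃ i j, IsMaxAltOn f n i j ∧ i ≤ u ∧ v ≤ j := by
  set S := (Finset.range n ×ˢ Finset.range n).filter
    fun p => p.1 ≤ u ∧ v ≤ p.2 ∧ AltOn f p.1 p.2 with hS
  have hmem : ∀ i j, (i, j) ∈ S ↔ j < n ∧ i ≤ u ∧ v ≤ j ∧ AltOn f i j := by
    intro i j
    simp only [hS, Finset.mem_filter, Finset.mem_product, Finset.mem_range]
    constructor
    · rintro ⟨⟨-, hj⟩, h⟩; exact ⟨hj, h⟩
    · rintro ⟨hj, h⟩; exact ⟨⟨by omega, hj⟩, h⟩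
  obtain ⟨⟨i, j⟩, hp, hlongest⟩ :=
    S.exists_max_image (fun p => p.2 - p.1) ⟨(u, v), (hmem u v).2 ⟨hv, le_rfl, le_rfl, h⟩⟩
  obtain ⟨hj, hiu, hvj, hij⟩ := (hmem i j).1 hp
  refine ⟨i, j, ⟨by omega, hj, hij, fun hi hext => ?_, fun hj' hext => ?_⟩, hiu, hvj⟩
  · have := hlongest (i - 1, j) ((hmem _ _).2 ⟨hj, by omega, hvj, hext⟩)
    dsimp only at this
    omega
  · have := hlongest (i, j + 1) ((hmem _ _).2 ⟨hj', hiu, by omega, hext⟩)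
    dsimp only at this
    omega

theorem IsMaxAltOn.eq_of_altOn {i' j' : ℕ} (h : IsMaxAltOn f n i j) (h' : AltOn f i' j')
    (hi : i' ≤ i) (hj : j ≤ j') (hj' : j' < n) : i' = i ∧ j' = j := by
  obtain ⟨-, -, -, hleft, hright⟩ := h
  constructor
  · by_contra hne
    exact hleft (by omega) (h'.mono (by omega) hj)
  · by_contra hne
    exact hright (by omega) (h'.mono hi (by omega))

theorem IsMaxAltOn.eq {i' j' : ℕ} (h : IsMaxAltOn f n i j) (h' : IsMaxAltOn f n i' j')
    (hov : max i i' < min j j') : i = i' ∧ j = j' := by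
  have hunion := h.2.2.1.union h'.2.2.1 hov
  have hjn : max j j' < n := max_lt h.2.1 h'.2.1
  have e := h.eq_of_altOn hunion (min_le_left _ _) (le_max_left _ _) hjn
  have e' := h'.eq_of_altOn hunion (min_le_right _ _) (le_max_right _ _) hjn
  omega

noncomputable def segsCovering (f : ℕ → α) (n a b : ℕ) : Finset (ℕ × ℕ) :=
  (altSegs f n).filter fun p => p.1 ≤ a ∧ b ≤ p.2

theorem card_segsCovering_of_lt (hab : a < b) :
    (segsCovering f n a b).card = if b < n ∧ AltOn f a b then 1 else 0 := by
  split_ifs with h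
  · obtain ⟨i, j, hmax, hi, hj⟩ := exists_isMaxAltOn hab.le h.1 h.2
    rw [Finset.card_eq_one]
    refine ⟨(i, j), Finset.eq_singleton_iff_unique_mem.2 ⟨?_, fun p hp => ?_⟩⟩
    · exact Finset.mem_filter.2 ⟨mem_altSegs.2 hmax, hi, hj⟩
    · obtain ⟨hp, hpa, hpb⟩ := Finset.mem_filter.1 hp
      obtain ⟨e1, e2⟩ := (mem_altSegs.1 hp).eq hmax (by omega)
      exact Prod.ext e1 e2
  · refine Finset.card_eq_zero.2 (Finset.filter_eq_empty_iff.2 fun p hp ⟨hpa, hpb⟩ => h ?_)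
    have hmax := mem_altSegs.1 hp
    exact ⟨hpb.trans_lt hmax.2.1, hmax.2.2.1.mono hpa hpb⟩

-- Exactly the positions where one maximal segment ends and the next one begins.
def IsOverlapAt (f : ℕ → α) (n a : ℕ) : Prop :=
  0 < a ∧ a + 1 < n ∧ f (a - 1) ≠ f a ∧ f a ≠ f (a + 1) ∧ f (a - 1) ≠ f (a + 1)

theorem card_altSegs_filter_lt_le (ha : a < n) :
    ((altSegs f n).filter fun p => p.1 < a ∧ a ≤ p.2).card
      = if 0 < a ∧ f (a - 1) ≠ f a then 1 else 0 := by
  rcases a with _ | m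
  · simp
  · rw [show ((altSegs f n).filter fun p => p.1 < m + 1 ∧ m + 1 ≤ p.2)
        = segsCovering f n m (m + 1)
      from Finset.filter_congr fun p _ => by omega, card_segsCovering_of_lt m.lt_succ_self,
      altOn_succ_iff]
    simp [ha]

theorem card_altSegs_filter_le_lt :
    ((altSegs f n).filter fun p => p.1 ≤ a ∧ a < p.2).card
      = if a + 1 < n ∧ f a ≠ f (a + 1) then 1 else 0 := by
  rw [show ((altSegs f n).filter fun p => p.1 ≤ a ∧ a < p.2) = segsCovering f n a (a + 1)
      from Finset.filter_congr fun p _ => by omega, card_segsCovering_of_lt a.lt_add_one,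
      altOn_succ_iff]
  congr

theorem card_altSegs_filter_lt_lt :
    ((altSegs f n).filter fun p => p.1 < a ∧ a < p.2).card
      = if 0 < a ∧ a + 1 < n ∧ f (a - 1) ≠ f a ∧ f (a + 1) = f (a - 1) then 1 else 0 := by
  rcases a with _ | m
  · simp
  · rw [show ((altSegs f n).filter fun p => p.1 < m + 1 ∧ m + 1 < p.2)
        = segsCovering f n m (m + 2)
      from Finset.filter_congr fun p _ => by omega, card_segsCovering_of_lt (by omega),
      altOn_succ_right_iff m.lt_succ_self, altOn_succ_iff]
    simp

theorem mem_altSegs_self_iff :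
    (a, a) ∈ altSegs f n ↔
      a < n ∧ ¬ (0 < a ∧ f (a - 1) ≠ f a) ∧ ¬ (a + 1 < n ∧ f a ≠ f (a + 1)) := by
  rw [mem_altSegs]
  rcases a with _ | m <;> simp [IsMaxAltOn, altOn_self, altOn_succ_iff]

-- A segment through `a` reaches left of `a`, reaches right of `a`, or is `{a}`;
-- the segments reaching both ways are counted by `card_altSegs_filter_lt_lt`.
theorem card_segsCovering_self (ha : a < n) :
    (segsCovering f n a a).card = if IsOverlapAt f n a then 2 else 1 := by
  set A := (altSegs f n).filter fun p => p.1 < a ∧ a ≤ p.2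
  set B := (altSegs f n).filter fun p => p.1 ≤ a ∧ a < p.2
  set S := (altSegs f n).filter fun p => p = (a, a)
  have hsplit : segsCovering f n a a = A ∪ B ∪ S := by
    rw [← Finset.filter_or, ← Finset.filter_or]
    refine Finset.filter_congr fun p _ => ?_
    rw [Prod.ext_iff]
    omega
  have hinter : A ∩ B = (altSegs f n).filter fun p => p.1 < a ∧ a < p.2 := by
    rw [← Finset.filter_and]
    exact Finset.filter_congr fun p _ => by omega
  have hdisj : Disjoint (A ∪ B) S := by
    rw [← Finset.filter_or]
    exact Finset.disjoint_filter.2 fun p _ h hp => by subst hp; omega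
  have hS : S.card = if ¬ (0 < a ∧ f (a - 1) ≠ f a) ∧ ¬ (a + 1 < n ∧ f a ≠ f (a + 1))
      then 1 else 0 := by
    simp only [S, Finset.filter_eq', mem_altSegs_self_iff, ha, true_and]
    split_ifs <;> simp
  have hIE := Finset.card_union_add_card_inter A B
  rw [hinter, card_altSegs_filter_lt_le ha, card_altSegs_filter_le_lt,
    card_altSegs_filter_lt_lt] at hIE
  rw [hsplit, Finset.card_union_of_disjoint hdisj, hS]
  unfold IsOverlapAt
  split_ifs at hIE ⊢ <;> simp_all

theorem sq_segLength_eq (hj : j < n) :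
    (j + 1 - i) ^ 2 = ∑ a ∈ Finset.range n, (if i ≤ a ∧ a ≤ j then 1 else 0)
      + 2 * ∑ b ∈ Finset.range n, ∑ a ∈ Finset.range b,
          (if i ≤ a ∧ b ≤ j then 1 else 0) := by
  have hlen : j + 1 - i = ∑ a ∈ Finset.range n, (if i ≤ a ∧ a ≤ j then 1 else 0) := by
    rw [← Finset.card_filter, ← Nat.card_Icc]
    congr 1
    ext a
    simp only [Finset.mem_Icc, Finset.mem_filter, Finset.mem_range]
    omega
  rw [hlen, Finset.sq_sum_range]
  congr 1
  · refine Finset.sum_congr rfl fun a _ => ?_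
    split_ifs <;> rfl
  · refine congrArg (2 * ·) (Finset.sum_congr rfl fun b _ => Finset.sum_congr rfl fun a ha => ?_)
    have hab := Finset.mem_range.1 ha
    split_ifs <;> first | rfl | omega

theorem sum_altSegs_sq_eq (f : ℕ → α) (n : ℕ) :
    ∑ p ∈ altSegs f n, (p.2 + 1 - p.1) ^ 2
      = ∑ a ∈ Finset.range n, (segsCovering f n a a).card
        + 2 * ∑ b ∈ Finset.range n, ∑ a ∈ Finset.range b, (segsCovering f n a b).card := by
  rw [Finset.sum_congr rfl fun p hp => sq_segLength_eq (mem_altSegs.1 hp).2.1,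
    Finset.sum_add_distrib, ← Finset.mul_sum, Finset.sum_comm]
  simp only [segsCovering, Finset.card_filter]
  congr 2
  refine (Finset.sum_comm).trans (Finset.sum_congr rfl fun b _ => Finset.sum_comm)

theorem segLenSqSum_eq (l : List α) :
    segLenSqSum l = l.length
      + ∑ a ∈ Finset.range l.length, (if IsOverlapAt (l[·]?) l.length a then 1 else 0)
      + 2 * ∑ b ∈ Finset.range l.length, ∑ a ∈ Finset.range b,
          (if AltOn (l[·]?) a b then 1 else 0) := by
  rw [segLenSqSum, maxAltSegs_eq_altSegs, sum_altSegs_sq_eq]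
  congr 1
  · rw [Finset.sum_congr rfl fun a ha => (card_segsCovering_self (Finset.mem_range.1 ha)).trans
      (show _ = 1 + if IsOverlapAt (l[·]?) l.length a then 1 else 0 by split_ifs <;> rfl),
      Finset.sum_add_distrib, Finset.sum_const, Finset.card_range, smul_eq_mul, mul_one]
  · refine congrArg (2 * ·) (Finset.sum_congr rfl fun b hb => Finset.sum_congr rfl fun a ha => ?_)
    rw [card_segsCovering_of_lt (Finset.mem_range.1 ha)]
    simp [Finset.mem_range.1 hb]

end Segments

section Counting

variable {β : Type*} {n u v a b : ℕ}

theorem getElem?_ofFn_update_of_ne (x : Fin n → β) (j : Fin n) (c : β) {k : ℕ}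
    (hk : k ≠ j) :
    (List.ofFn (Function.update x j c))[k]? = (List.ofFn x)[k]? := by
  simp only [List.getElem?_ofFn]
  split_ifs with h
  · rw [Function.update_of_ne (fun e => hk (congrArg Fin.val e))]
  · rfl

theorem getElem?_ofFn_of_lt (x : Fin n → β) {k : ℕ} (hk : k < n) :
    (List.ofFn x)[k]? = some (x ⟨k, hk⟩) := by
  simp [hk]

variable [Fintype β]

theorem card_filter_ne (b : β) :
    (Finset.univ.filter fun c => b ≠ c).card = Fintype.card β - 1 := by
  simp [Finset.filter_ne, Finset.card_univ]

theorem card_filter_ne_and_ne {b b' : β} (hb : b ≠ b') :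
    (Finset.univ.filter fun c => b ≠ c ∧ b' ≠ c).card = Fintype.card β - 2 := by
  rw [show (Finset.univ.filter fun c => b ≠ c ∧ b' ≠ c)
      = (Finset.univ.erase b).erase b' by ext; simp [eq_comm, and_comm],
    Finset.card_erase_of_mem (by simpa using hb.symm), Finset.card_erase_of_mem (Finset.mem_univ _),
    Finset.card_univ]
  omega

theorem card_filter_ne_mul_card (ha : a + 1 < n) :
    (Finset.univ.filter fun x : Fin n → β => (List.ofFn x)[a]? ≠ (List.ofFn x)[a + 1]?).card
      * Fintype.card β = Fintype.card β ^ n * (Fintype.card β - 1) := by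
  let j : Fin n := ⟨a + 1, ha⟩
  rw [show (Finset.univ.filter fun x : Fin n → β => (List.ofFn x)[a]? ≠ (List.ofFn x)[a + 1]?)
      = Finset.univ.filter fun x => (List.ofFn x)[a]? ≠ some (x j)
      from Finset.filter_congr fun x _ => by rw [getElem?_ofFn_of_lt x ha],
    Finset.card_filter_apply_mul_card j (fun (x : Fin n → β) c => (List.ofFn x)[a]? ≠ some c)
      fun x c d => by rw [getElem?_ofFn_update_of_ne x j c (show a ≠ a + 1 by omega)]]
  rw [Finset.sum_congr rfl fun x _ => show _ = Fintype.card β - 1 by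
    simp only [getElem?_ofFn_of_lt x (by omega : a < n), ne_eq, Option.some_inj]
    exact card_filter_ne _]
  simp

theorem card_filter_altOn_succ_mul_card (huv : u < v) (hv : v + 1 < n) :
    (Finset.univ.filter fun x : Fin n → β => AltOn ((List.ofFn x)[·]?) u (v + 1)).card
      * Fintype.card β
      = (Finset.univ.filter fun x : Fin n → β => AltOn ((List.ofFn x)[·]?) u v).card := by
  let j : Fin n := ⟨v + 1, hv⟩
  rw [show (Finset.univ.filter fun x : Fin n → β => AltOn ((List.ofFn x)[·]?) u (v + 1))
      = Finset.univ.filter fun x =>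
          AltOn ((List.ofFn x)[·]?) u v ∧ some (x j) = (List.ofFn x)[v - 1]?
      from Finset.filter_congr fun x _ => by
        rw [altOn_succ_right_iff huv, getElem?_ofFn_of_lt x hv],
    Finset.card_filter_apply_mul_card j
      (fun (x : Fin n → β) c =>
        AltOn ((List.ofFn x)[·]?) u v ∧ some c = (List.ofFn x)[v - 1]?)
      fun x c d => by
        rw [getElem?_ofFn_update_of_ne x j c (show v - 1 ≠ v + 1 by omega),
          altOn_congr fun k hk => getElem?_ofFn_update_of_ne x j c (show k ≠ v + 1 by omega)],
    Finset.card_filter]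
  refine Finset.sum_congr rfl fun x _ => ?_
  rw [getElem?_ofFn_of_lt x (show v - 1 < n by omega)]
  by_cases h : AltOn ((List.ofFn x)[·]?) u v
  · simp only [h, true_and, if_true, Option.some_inj]
    exact Finset.card_eq_one.2 ⟨_, Finset.filter_eq' _ _ |>.trans (if_pos (Finset.mem_univ _))⟩
  · simp only [h, false_and, if_false, Finset.filter_false, Finset.card_empty]

theorem card_filter_altOn_mul_pow (huv : u < v) (hv : v < n) :
    (Finset.univ.filter fun x : Fin n → β => AltOn ((List.ofFn x)[·]?) u v).card
      * Fintype.card β ^ (v - u) = Fintype.card β ^ n * (Fintype.card β - 1) := by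
  induction v, huv using Nat.le_induction with
  | base =>
    rw [show u + 1 - u = 1 by omega, pow_one, ← card_filter_ne_mul_card hv]
    congr 2
    exact Finset.filter_congr fun x _ => altOn_succ_iff
  | succ v huv ih =>
    rw [show v + 1 - u = v - u + 1 by omega, pow_succ', ← mul_assoc,
      card_filter_altOn_succ_mul_card huv hv, ih (by omega)]

theorem card_filter_isOverlapAt_mul_sq (ha : 0 < a) (ha' : a + 1 < n) :
    (Finset.univ.filter fun x : Fin n → β => IsOverlapAt ((List.ofFn x)[·]?) n a).card
      * Fintype.card β ^ 2
      = Fintype.card β ^ n * (Fintype.card β - 1) * (Fintype.card β - 2) := by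
  obtain ⟨m, rfl⟩ : ∃ m, a = m + 1 := ⟨a - 1, by omega⟩
  let j : Fin n := ⟨m + 2, ha'⟩
  have hne : ∀ (x : Fin n → β) (c : β) {k}, k ≤ m + 1 →
      (List.ofFn (Function.update x j c))[k]? = (List.ofFn x)[k]? :=
    fun x c k hk => getElem?_ofFn_update_of_ne x j c (by simp [j]; omega)
  rw [show (Finset.univ.filter fun x : Fin n → β => IsOverlapAt ((List.ofFn x)[·]?) n (m + 1))
      = Finset.univ.filter fun x => (List.ofFn x)[m]? ≠ (List.ofFn x)[m + 1]? ∧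
          ((List.ofFn x)[m + 1]? ≠ some (x j) ∧ (List.ofFn x)[m]? ≠ some (x j))
      from Finset.filter_congr fun x _ => by
        rw [IsOverlapAt, getElem?_ofFn_of_lt x ha']
        simp only [ha', m.succ_pos, Nat.add_sub_cancel, true_and]
        exact Iff.rfl,
    pow_two, ← mul_assoc,
    Finset.card_filter_apply_mul_card j
      (fun (x : Fin n → β) c => (List.ofFn x)[m]? ≠ (List.ofFn x)[m + 1]? ∧
          ((List.ofFn x)[m + 1]? ≠ some c ∧ (List.ofFn x)[m]? ≠ some c))
      fun x c d => by rw [hne x c le_rfl, hne x c m.le_succ]]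
  have hsum : ∀ x : Fin n → β, (Finset.univ.filter fun c =>
      (List.ofFn x)[m]? ≠ (List.ofFn x)[m + 1]? ∧
        ((List.ofFn x)[m + 1]? ≠ some c ∧ (List.ofFn x)[m]? ≠ some c)).card
      = (if (List.ofFn x)[m]? ≠ (List.ofFn x)[m + 1]? then 1 else 0) * (Fintype.card β - 2) := by
    intro x
    have hm : m < n := by omega
    have hm1 : m + 1 < n := by omega
    simp only [getElem?_ofFn_of_lt x hm, getElem?_ofFn_of_lt x hm1, ne_eq, Option.some_inj]
    by_cases h : x ⟨m, hm⟩ = x ⟨m + 1, hm1⟩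
    · simp [h]
    · simp only [h, not_false_eq_true, true_and, if_true, one_mul]
      exact card_filter_ne_and_ne (Ne.symm h)
  rw [Finset.sum_congr rfl fun x _ => hsum x, ← Finset.sum_mul, ← Finset.card_filter,
    mul_right_comm, card_filter_ne_mul_card (by omega)]

theorem sum_boole_isOverlapAt (hβ : 2 ≤ Fintype.card β) (a : ℕ) :
    (∑ x : Fin n → β, if IsOverlapAt ((List.ofFn x)[·]?) n a then 1 else 0 : ℚ)
      = if 0 < a ∧ a + 1 < n then
          (Fintype.card β : ℚ) ^ n
            * ((Fintype.card β - 1) * (Fintype.card β - 2) / Fintype.card β ^ 2)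
        else 0 := by
  rw [Finset.sum_boole]
  split_ifs with ha
  · have hcount :=
      congrArg (Nat.cast (R := ℚ)) (card_filter_isOverlapAt_mul_sq (β := β) ha.1 ha.2)
    push_cast [Nat.cast_sub hβ, Nat.cast_sub (one_le_two.trans hβ)] at hcount
    have hq : (Fintype.card β : ℚ) ≠ 0 := by norm_cast; omega
    field_simp
    linear_combination hcount
  · simp only [Nat.cast_eq_zero, Finset.card_eq_zero, Finset.filter_eq_empty_iff]
    exact fun x _ hx => ha ⟨hx.1, hx.2.1⟩

theorem sum_boole_altOn (hβ : 1 ≤ Fintype.card β) (hab : a < b) (hb : b < n) :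
    (∑ x : Fin n → β, if AltOn ((List.ofFn x)[·]?) a b then 1 else 0 : ℚ)
      = (Fintype.card β : ℚ) ^ n * ((Fintype.card β - 1) / Fintype.card β ^ (b - a)) := by
  rw [Finset.sum_boole]
  have hcount := congrArg (Nat.cast (R := ℚ)) (card_filter_altOn_mul_pow (β := β) hab hb)
  push_cast [Nat.cast_sub hβ] at hcount
  have hq : (Fintype.card β : ℚ) ≠ 0 := by norm_cast; omega
  field_simp
  linear_combination hcount

theorem sum_segLenSqSum_ofFn (hβ : 2 ≤ Fintype.card β) (hn : 2 ≤ n) :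
    ∑ x : Fin n → β, (segLenSqSum (List.ofFn x) : ℚ)
      = (Fintype.card β : ℚ) ^ n * (n
        + (n - 2) * ((Fintype.card β - 1) * (Fintype.card β - 2) / Fintype.card β ^ 2)
        + 2 * (n - ∑ b ∈ Finset.range n, (1 / (Fintype.card β : ℚ)) ^ b)) := by
  have hq : (Fintype.card β : ℚ) ≠ 0 := by norm_cast; omega
  have hinterior : ((Finset.range n).filter fun a => 0 < a ∧ a + 1 < n).card = n - 2 := by
    rw [show (Finset.range n).filter (fun a => 0 < a ∧ a + 1 < n) = Finset.Ioo 0 (n - 1) by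
      ext a; simp only [Finset.mem_filter, Finset.mem_range, Finset.mem_Ioo]; omega, Nat.card_Ioo]
    omega
  have hpairs : ∀ b ∈ Finset.range n, ∑ a ∈ Finset.range b,
      (∑ x : Fin n → β, if AltOn ((List.ofFn x)[·]?) a b then 1 else 0 : ℚ)
        = (Fintype.card β : ℚ) ^ n * (1 - (1 / (Fintype.card β : ℚ)) ^ b) := by
    intro b hb
    rw [Finset.sum_congr rfl fun a ha => sum_boole_altOn (by omega) (Finset.mem_range.1 ha)
      (Finset.mem_range.1 hb), ← Finset.mul_sum, Finset.sum_range_sub_one_div_pow hq, one_div_pow]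
  simp only [segLenSqSum_eq, List.length_ofFn]
  push_cast
  rw [Finset.sum_add_distrib, Finset.sum_add_distrib, ← Finset.mul_sum, Finset.sum_comm,
    Finset.sum_congr rfl fun a _ => sum_boole_isOverlapAt hβ a, Finset.sum_ite,
    Finset.sum_const_zero, add_zero, Finset.sum_comm,
    Finset.sum_congr rfl fun b _ => Finset.sum_comm,
    Finset.sum_congr rfl hpairs]
  simp only [← Finset.mul_sum, Finset.sum_sub_distrib, Finset.sum_const, hinterior,
    Finset.card_univ, Fintype.card_fun, Fintype.card_fin, Finset.card_range, nsmul_eq_mul,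
    Nat.cast_sub hn]
  push_cast
  ring

end Counting

end AltSeg

open AltSeg in
/-- The expected sum of squared lengths of the maximal alternating
segments of a uniform `x ∈ Z_q^n` is
`n(4q²-3q+2)/q² + (6q-4)/q² - 4 - (2/(q-1))(1 - 1/q^{n-1})`. -/
theorem expected_segLenSqSum (q n : ℕ) (hq : 2 ≤ q) (hn : 2 ≤ n) :
    (∑ x : Fin n → Fin q, (segLenSqSum (List.ofFn x) : ℚ)) / (q : ℚ) ^ n =
      (n : ℚ) * (4 * (q : ℚ) ^ 2 - 3 * q + 2) / (q : ℚ) ^ 2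
        + (6 * (q : ℚ) - 4) / (q : ℚ) ^ 2 - 4
        - (2 / ((q : ℚ) - 1)) * (1 - 1 / (q : ℚ) ^ (n - 1)) := by
  have hq0 : (q : ℚ) ≠ 0 := by positivity
  have hq1 : (q : ℚ) - 1 ≠ 0 := sub_ne_zero.2 (by norm_cast; omega)
  have hq1' : 1 - (q : ℚ) ≠ 0 := sub_ne_zero.2 (by norm_cast; omega)
  have hinv : 1 / (q : ℚ) ≠ 1 := by rw [Ne, div_eq_one_iff_eq hq0]; norm_cast; omega
  rw [sum_segLenSqSum_ofFn (by simpa using hq) hn, Fintype.card_fin, geom_sum_eq hinv]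
  obtain ⟨m, rfl⟩ : ∃ m, n = m + 1 := ⟨n - 1, by omega⟩
  simp only [one_div_pow, Nat.add_sub_cancel]
  field_simp
  push_cast
  ring
end
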